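/- arXiv:1306.0220 — 5 statements merged into one kernel-verified Lean document; each statement's English description precedes it below -/
import Mathlib

section
/- Let p, q ∈ ℕ with q ≥ 1 and ℓ > 0. Suppose the smooth map Y : ℝ² → ℝ^{p+3}, (τ,σ) ↦ Y(τ,σ), together with Λ : ℝ² → ℝ, satisfies the conformal-gauge string system on AdS_{p+2} of radius ℓ. Define Ŷ : ℝ³ → ℝ^{p+3} and X : ℝ³ → ℝ^{q+1} on coordinates (τ,σ,δ) by Ŷ(τ,σ,δ) = Y(τ,σ) and X(τ,σ,δ) = (cos δ, sin δ, 0, …, 0), and set Λ̂(τ,σ,δ) = Λ(τ,σ) and Λ̃(τ,σ,δ) = η(∂σY(τ,σ), ∂σY(τ,σ)). Then (Ŷ, X, Λ̂, Λ̃) satisfies the gauge-fixed membrane system on AdS_{p+2} × S^q with AdS radius ℓ and unit sphere radius. (This is the embedding-coordinate content of the paper's Propositions 1, 2 and 3: every pure AdS string soliton in conformal gauge extends, by wrapping a great circle of the sphere, to a membrane soliton.) -/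
noncomputable section

open Real

/-- Sign of the AdS embedding metric η = diag(−1, 1, …, 1, −1) on ℝ^{p+3}. -/
def etaSign (p : ℕ) (μ : Fin (p + 3)) : ℝ :=
  if μ.val = 0 ∨ μ.val = p + 2 then -1 else 1

/-- The AdS embedding bilinear form η(u,v) = −u₀v₀ + u₁v₁ + ⋯ + u_{p+1}v_{p+1} − u_{p+2}v_{p+2}. -/
def etaForm (p : ℕ) (u v : Fin (p + 3) → ℝ) : ℝ :=
  ∑ μ, etaSign p μ * u μ * v μ

/-- The conformal-gauge string system on AdS_{p+2} of radius ℓ, for a map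
`Y : ℝ² → ℝ^{p+3}` (curried as `Y τ σ`) and Lagrange multiplier `Λ`. -/
def IsConformalString (p : ℕ) (ℓ : ℝ) (Y : ℝ → ℝ → Fin (p + 3) → ℝ)
    (Λ : ℝ → ℝ → ℝ) : Prop :=
  (∀ τ σ μ,
    deriv (fun t => deriv (fun t' => Y t' σ μ) t) τ
      - deriv (fun s => deriv (fun s' => Y τ s' μ) s) σ = Λ τ σ * Y τ σ μ) ∧
  (∀ τ σ, etaForm p (Y τ σ) (Y τ σ) = -ℓ ^ 2) ∧
  (∀ τ σ, etaForm p (fun μ => deriv (fun t => Y t σ μ) τ)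
      (fun μ => deriv (fun s => Y τ s μ) σ) = 0) ∧
  (∀ τ σ, etaForm p (fun μ => deriv (fun t => Y t σ μ) τ)
        (fun μ => deriv (fun t => Y t σ μ) τ)
      + etaForm p (fun μ => deriv (fun s => Y τ s μ) σ)
        (fun μ => deriv (fun s => Y τ s μ) σ) = 0)

/-- The world-volume Poisson bracket {F,G} = ∂σF ∂δG − ∂δF ∂σG for functions of (τ,σ,δ). -/
def pb (F G : ℝ → ℝ → ℝ → ℝ) : ℝ → ℝ → ℝ → ℝ :=
  fun τ σ δ =>
    deriv (fun s => F τ s δ) σ * deriv (fun d => G τ σ d) δ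
      - deriv (fun d => F τ σ d) δ * deriv (fun s => G τ s δ) σ

/-- The gauge-fixed membrane system on AdS_{p+2} × S^q with AdS radius ℓ and unit sphere
radius: equations of motion (i)–(ii), geometric constraints (iii), and the gauge
constraints (iv)–(v). -/
def IsMembrane (p q : ℕ) (ℓ : ℝ) (Yh : ℝ → ℝ → ℝ → Fin (p + 3) → ℝ)
    (X : ℝ → ℝ → ℝ → Fin (q + 1) → ℝ) (Λh Λt : ℝ → ℝ → ℝ → ℝ) : Prop :=
  -- component and lowered-component functions
  let Yc : Fin (p + 3) → ℝ → ℝ → ℝ → ℝ := fun μ τ σ δ => Yh τ σ δ μ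
  let Yl : Fin (p + 3) → ℝ → ℝ → ℝ → ℝ := fun μ τ σ δ => etaSign p μ * Yh τ σ δ μ
  let Xc : Fin (q + 1) → ℝ → ℝ → ℝ → ℝ := fun i τ σ δ => X τ σ δ i
  -- (i) AdS equations of motion
  ((∀ τ σ δ μ,
    deriv (fun t => deriv (fun t' => Yh t' σ δ μ) t) τ
      = (∑ ν, pb (pb (Yc μ) (Yc ν)) (Yl ν) τ σ δ)
        + (∑ i, pb (pb (Yc μ) (Xc i)) (Xc i) τ σ δ)
        + Λh τ σ δ * Yh τ σ δ μ) ∧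
  -- (ii) sphere equations of motion
  (∀ τ σ δ i,
    deriv (fun t => deriv (fun t' => X t' σ δ i) t) τ
      = (∑ j, pb (pb (Xc i) (Xc j)) (Xc j) τ σ δ)
        + (∑ ν, pb (pb (Xc i) (Yc ν)) (Yl ν) τ σ δ)
        + Λt τ σ δ * X τ σ δ i) ∧
  -- (iii) embedding constraints
  (∀ τ σ δ, etaForm p (Yh τ σ δ) (Yh τ σ δ) = -ℓ ^ 2) ∧
  (∀ τ σ δ, ∑ i, (X τ σ δ i) ^ 2 = 1) ∧
  -- (iv) gauge constraints γ_{0i} = 0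
  (∀ τ σ δ,
    etaForm p (fun μ => deriv (fun t => Yh t σ δ μ) τ)
        (fun μ => deriv (fun s => Yh τ s δ μ) σ)
      + ∑ i, deriv (fun t => X t σ δ i) τ * deriv (fun s => X τ s δ i) σ = 0) ∧
  (∀ τ σ δ,
    etaForm p (fun μ => deriv (fun t => Yh t σ δ μ) τ)
        (fun μ => deriv (fun d => Yh τ σ d μ) δ)
      + ∑ i, deriv (fun t => X t σ δ i) τ * deriv (fun d => X τ σ d i) δ = 0) ∧
  -- (v) Hamiltonian (γ_{00}) constraint
  (∀ τ σ δ,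
    etaForm p (fun μ => deriv (fun t => Yh t σ δ μ) τ)
        (fun μ => deriv (fun t => Yh t σ δ μ) τ)
      + (∑ i, (deriv (fun t => X t σ δ i) τ) ^ 2)
      + (1 / 2) * (∑ μ, ∑ ν, pb (Yc μ) (Yc ν) τ σ δ * pb (Yl μ) (Yl ν) τ σ δ)
      + (1 / 2) * (∑ i, ∑ j, (pb (Xc i) (Xc j) τ σ δ) ^ 2)
      + (∑ ν, ∑ i, pb (Yc ν) (Xc i) τ σ δ * pb (Yl ν) (Xc i) τ σ δ) = 0))

namespace StringyMembraneAux

lemma sum_two {q : ℕ} (hq : 1 ≤ q) (f : Fin (q+1) → ℝ) (a b : ℝ)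
    (hf : ∀ i, f i = if i.val = 0 then a else if i.val = 1 then b else 0) :
    (∑ i, f i) = a + b := by
  have key : ∀ i : Fin (q+1),
      f i = (if i = (⟨0, by omega⟩ : Fin (q+1)) then a else 0)
          + (if i = (⟨1, by omega⟩ : Fin (q+1)) then b else 0) := by
    intro i
    rw [hf i]
    by_cases h0 : i.val = 0 <;> by_cases h1 : i.val = 1 <;> simp [Fin.ext_iff, h0, h1] <;> omega
  rw [Finset.sum_congr rfl (fun i _ => key i), Finset.sum_add_distrib]
  rw [Finset.sum_ite_eq', Finset.sum_ite_eq']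
  simp

lemma sumDD {q : ℕ} (hq : 1 ≤ q) (δ : ℝ) :
    (∑ i : Fin (q+1),
      (if i.val = 0 then -Real.sin δ else if i.val = 1 then Real.cos δ else 0)
        * (if i.val = 0 then -Real.sin δ else if i.val = 1 then Real.cos δ else 0)) = 1 := by
  rw [sum_two hq _ (Real.sin δ * Real.sin δ) (Real.cos δ * Real.cos δ) (fun i => by
    by_cases h0 : i.val = 0 <;> by_cases h1 : i.val = 1 <;> simp [h0, h1])]
  nlinarith [Real.sin_sq_add_cos_sq δ]

end StringyMembraneAux

/-- Every pure AdS string soliton in conformal gauge extends, by wrapping a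
great circle of the sphere, to a membrane soliton on AdS_{p+2} × S^q. -/
theorem stringy_membrane_embedding (p q : ℕ) (hq : 1 ≤ q) (ℓ : ℝ) (hℓ : 0 < ℓ)
    (Y : ℝ → ℝ → Fin (p + 3) → ℝ) (Λ : ℝ → ℝ → ℝ)
    (hY_smooth : ∀ μ, ContDiff ℝ (⊤ : ℕ∞) (fun z : ℝ × ℝ => Y z.1 z.2 μ))
    (hY : IsConformalString p ℓ Y Λ) :
    IsMembrane p q ℓ
      (fun τ σ _ => Y τ σ)
      (fun _ _ δ i => if i.val = 0 then Real.cos δ else if i.val = 1 then Real.sin δ else 0)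
      (fun τ σ _ => Λ τ σ)
      (fun τ σ _ => etaForm p (fun μ => deriv (fun s => Y τ s μ) σ)
        (fun μ => deriv (fun s => Y τ s μ) σ)) := by
  obtain ⟨heom, hYY, hts, hvir⟩ := hY
  unfold IsMembrane
  dsimp only
  refine ⟨?_, ?_, ?_, ?_, ?_, ?_, ?_⟩
  · -- (i) AdS equations of motion
    intro τ σ δ μ
    have h1 : ∀ ν : Fin (p+3),
        pb (pb (fun a b (_ : ℝ) => Y a b μ) (fun a b (_ : ℝ) => Y a b ν))
          (fun a b (_ : ℝ) => etaSign p ν * Y a b ν) τ σ δ = 0 := by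
      intro ν
      have hz : pb (fun a b (_ : ℝ) => Y a b μ) (fun a b (_ : ℝ) => Y a b ν)
          = fun _ _ _ => (0 : ℝ) := by
        funext a b c; simp [pb]
      rw [hz]; simp [pb]
    have h2 : ∀ i : Fin (q+1),
        pb (pb (fun a b (_ : ℝ) => Y a b μ)
            (fun (_ _ : ℝ) d => if i.val = 0 then Real.cos d else if i.val = 1 then Real.sin d else 0))
          (fun (_ _ : ℝ) d => if i.val = 0 then Real.cos d else if i.val = 1 then Real.sin d else 0) τ σ δ
        = deriv (fun s => deriv (fun s' => Y τ s' μ) s) σ *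
            ((if i.val = 0 then -Real.sin δ else if i.val = 1 then Real.cos δ else 0)
              * (if i.val = 0 then -Real.sin δ else if i.val = 1 then Real.cos δ else 0)) := by
      intro i
      have hin : pb (fun a b (_ : ℝ) => Y a b μ)
          (fun (_ _ : ℝ) d => if i.val = 0 then Real.cos d else if i.val = 1 then Real.sin d else 0)
        = fun a b c => deriv (fun s => Y a s μ) b *
            (if i.val = 0 then -Real.sin c else if i.val = 1 then Real.cos c else 0) := by
        funext a b c
        by_cases h0 : i.val = 0 <;> by_cases h1 : i.val = 1 <;> simp [pb, h0, h1]
      rw [hin]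
      by_cases h0 : i.val = 0 <;> by_cases h1 : i.val = 1 <;>
        simp [pb, h0, h1, deriv_mul_const_field] <;> ring
    rw [Finset.sum_congr rfl (fun ν _ => h1 ν), Finset.sum_congr rfl (fun i _ => h2 i),
      ← Finset.mul_sum, StringyMembraneAux.sumDD hq δ]
    have := heom τ σ μ
    simp only [Finset.sum_const_zero]
    linarith
  · -- (ii) sphere equations of motion
    intro τ σ δ i
    have h1 : ∀ j : Fin (q+1),
        pb (pb (fun (_ _ : ℝ) d => if i.val = 0 then Real.cos d else if i.val = 1 then Real.sin d else 0)
            (fun (_ _ : ℝ) d => if j.val = 0 then Real.cos d else if j.val = 1 then Real.sin d else 0))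
          (fun (_ _ : ℝ) d => if j.val = 0 then Real.cos d else if j.val = 1 then Real.sin d else 0) τ σ δ = 0 := by
      intro j
      have hz : pb (fun (_ _ : ℝ) d => if i.val = 0 then Real.cos d else if i.val = 1 then Real.sin d else 0)
          (fun (_ _ : ℝ) d => if j.val = 0 then Real.cos d else if j.val = 1 then Real.sin d else 0)
          = fun _ _ _ => (0 : ℝ) := by
        funext a b c; simp [pb]
      rw [hz]; simp [pb]
    have h2 : ∀ ν : Fin (p+3),
        pb (pb (fun (_ _ : ℝ) d => if i.val = 0 then Real.cos d else if i.val = 1 then Real.sin d else 0)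
            (fun a b (_ : ℝ) => Y a b ν))
          (fun a b (_ : ℝ) => etaSign p ν * Y a b ν) τ σ δ
        = -((if i.val = 0 then Real.cos δ else if i.val = 1 then Real.sin δ else 0)
            * (etaSign p ν * deriv (fun s => Y τ s ν) σ * deriv (fun s => Y τ s ν) σ)) := by
      intro ν
      have hin : pb (fun (_ _ : ℝ) d => if i.val = 0 then Real.cos d else if i.val = 1 then Real.sin d else 0)
          (fun a b (_ : ℝ) => Y a b ν)
        = fun a b c => -((if i.val = 0 then -Real.sin c else if i.val = 1 then Real.cos c else 0)
            * deriv (fun s => Y a s ν) b) := by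
        funext a b c
        by_cases h0 : i.val = 0 <;> by_cases h1 : i.val = 1 <;> simp [pb, h0, h1]
      rw [hin]
      by_cases h0 : i.val = 0 <;> by_cases h1 : i.val = 1 <;>
        simp [pb, h0, h1, deriv_mul_const_field, deriv_const_mul_field] <;> ring
    rw [Finset.sum_congr rfl (fun j _ => h1 j), Finset.sum_congr rfl (fun ν _ => h2 ν)]
    simp only [Finset.sum_const_zero, Finset.sum_neg_distrib, ← Finset.mul_sum, etaForm]
    by_cases h0 : i.val = 0 <;> by_cases h1 : i.val = 1 <;> simp [h0, h1] <;> ring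
  · -- (iii) AdS embedding constraint
    intro τ σ δ
    exact hYY τ σ
  · -- (iii) sphere embedding constraint
    intro τ σ δ
    rw [StringyMembraneAux.sum_two hq _ (Real.cos δ ^ 2) (Real.sin δ ^ 2) (fun i => by
      by_cases h0 : i.val = 0 <;> by_cases h1 : i.val = 1 <;> simp [h0, h1])]
    exact Real.cos_sq_add_sin_sq δ
  · -- (iv) first gauge constraint
    intro τ σ δ
    simpa using hts τ σ
  · -- (iv) second gauge constraint
    intro τ σ δ
    simp [etaForm]
  · -- (v) Hamiltonian constraint
    intro τ σ δ
    have hYY0 : ∀ μ ν : Fin (p+3),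
        pb (fun a b (_ : ℝ) => Y a b μ) (fun a b (_ : ℝ) => Y a b ν) τ σ δ = 0 := by
      intro μ ν; simp [pb]
    have hXX0 : ∀ i j : Fin (q+1),
        pb (fun (_ _ : ℝ) d => if i.val = 0 then Real.cos d else if i.val = 1 then Real.sin d else 0)
           (fun (_ _ : ℝ) d => if j.val = 0 then Real.cos d else if j.val = 1 then Real.sin d else 0) τ σ δ = 0 := by
      intro i j; simp [pb]
    have hYX : ∀ (ν : Fin (p+3)) (i : Fin (q+1)),
        pb (fun a b (_ : ℝ) => Y a b ν)
            (fun (_ _ : ℝ) d => if i.val = 0 then Real.cos d else if i.val = 1 then Real.sin d else 0) τ σ δ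
          * pb (fun a b (_ : ℝ) => etaSign p ν * Y a b ν)
            (fun (_ _ : ℝ) d => if i.val = 0 then Real.cos d else if i.val = 1 then Real.sin d else 0) τ σ δ
        = (etaSign p ν * deriv (fun s => Y τ s ν) σ * deriv (fun s => Y τ s ν) σ)
            * ((if i.val = 0 then -Real.sin δ else if i.val = 1 then Real.cos δ else 0)
              * (if i.val = 0 then -Real.sin δ else if i.val = 1 then Real.cos δ else 0)) := by
      intro ν i
      by_cases h0 : i.val = 0 <;> by_cases h1 : i.val = 1 <;>
        simp [pb, h0, h1, deriv_const_mul_field] <;> ring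
    have hcross : (∑ ν : Fin (p+3), ∑ i : Fin (q+1),
        pb (fun a b (_ : ℝ) => Y a b ν)
            (fun (_ _ : ℝ) d => if i.val = 0 then Real.cos d else if i.val = 1 then Real.sin d else 0) τ σ δ
          * pb (fun a b (_ : ℝ) => etaSign p ν * Y a b ν)
            (fun (_ _ : ℝ) d => if i.val = 0 then Real.cos d else if i.val = 1 then Real.sin d else 0) τ σ δ)
        = ∑ ν : Fin (p+3), etaSign p ν * deriv (fun s => Y τ s ν) σ * deriv (fun s => Y τ s ν) σ := by
      refine Finset.sum_congr rfl (fun ν _ => ?_)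
      rw [Finset.sum_congr rfl (fun i _ => hYX ν i), ← Finset.mul_sum,
        StringyMembraneAux.sumDD hq δ, mul_one]
    simp only [hYY0, hXX0, zero_mul, ne_eq, OfNat.ofNat_ne_zero, not_false_eq_true,
      zero_pow, Finset.sum_const_zero, mul_zero, hcross]
    have hv := hvir τ σ
    simp only [etaForm] at hv ⊢
    simp only [deriv_const', ne_eq, OfNat.ofNat_ne_zero, not_false_eq_true, zero_pow,
      Finset.sum_const_zero, zero_mul, mul_zero, add_zero, zero_add]
    linarith
end
end

section
/- Let p, q ∈ ℕ and let Ŷ : ℝ³ → ℝ^{p+3}, X : ℝ³ → ℝ^{q+1} be smooth maps of (τ,σ,δ) which are 2π-periodic in σ and in δ, and let Λ̂, Λ̃ : ℝ³ → ℝ be such that the membrane equations of motion (i) ∂τ²Ŷ^μ = Σ_ν {{Ŷ^μ, Ŷ^ν}, Ŷ_ν} + Σ_i {{Ŷ^μ, X^i}, X^i} + Λ̂·Ŷ^μ and (ii) ∂τ²X^i = Σ_j {{X^i, X^j}, X^j} + Σ_ν {{X^i, Ŷ^ν}, Ŷ_ν} + Λ̃·X^i hold. Then for all μ, ν the Noether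 charge S^{μν}(τ) := ∫₀^{2π}∫₀^{2π} (Ŷ^μ ∂τŶ^ν − Ŷ^ν ∂τŶ^μ) dσ dδ is independent of τ, and for all i, j the charge J^{ij}(τ) := ∫₀^{2π}∫₀^{2π} (X^i ∂τX^j − X^j ∂τX^i) dσ dδ is independent of τ. -/
noncomputable section

open Real

namespace NA

abbrev R3 : Type := ℝ × ℝ × ℝ

def eT : R3 := (1,0,0)
def eS : R3 := (0,1,0)
def eD : R3 := (0,0,1)

def Dv (a : R3) (f : R3 → ℝ) : R3 → ℝ := fun x => fderiv ℝ f x a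

abbrev Sm (f : R3 → ℝ) : Prop := ContDiff ℝ (⊤ : ℕ∞) f

lemma Sm.dAt {f : R3 → ℝ} (hf : Sm f) (x : R3) : DifferentiableAt ℝ f x :=
  (hf.differentiable (by simp)).differentiableAt

lemma Sm.dv {f : R3 → ℝ} (hf : Sm f) (a : R3) : Sm (Dv a f) :=
  (hf.fderiv_right (by simp)).clm_apply contDiff_const

lemma Dv_add {f g : R3 → ℝ} (hf : Sm f) (hg : Sm g) (a : R3) :
    Dv a (fun y => f y + g y) = fun y => Dv a f y + Dv a g y := by
  funext x
  show fderiv ℝ _ x a = _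
  rw [fderiv_fun_add (hf.dAt x) (hg.dAt x)]
  rfl

lemma Dv_sub {f g : R3 → ℝ} (hf : Sm f) (hg : Sm g) (a : R3) :
    Dv a (fun y => f y - g y) = fun y => Dv a f y - Dv a g y := by
  funext x
  show fderiv ℝ _ x a = _
  rw [fderiv_fun_sub (hf.dAt x) (hg.dAt x)]
  rfl

lemma Dv_neg {f : R3 → ℝ} (a : R3) :
    Dv a (fun y => -f y) = fun y => -Dv a f y := by
  funext x
  show fderiv ℝ _ x a = _
  rw [fderiv_fun_neg]
  rfl

lemma Dv_mul {f g : R3 → ℝ} (hf : Sm f) (hg : Sm g) (a : R3) :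
    Dv a (fun y => f y * g y) = fun y => Dv a f y * g y + f y * Dv a g y := by
  funext x
  show fderiv ℝ _ x a = _
  rw [fderiv_fun_mul (hf.dAt x) (hg.dAt x)]
  simp [Dv]
  ring

lemma Dv_swap {f : R3 → ℝ} (hf : Sm f) (a b : R3) :
    Dv a (Dv b f) = Dv b (Dv a f) := by
  funext x
  have hd : DifferentiableAt ℝ (fderiv ℝ f) x :=
    ((hf.fderiv_right (m := 1) (by exact WithTop.coe_le_coe.2 le_top)).differentiable one_ne_zero).differentiableAt
  have key : ∀ u v : R3, Dv u (Dv v f) x = fderiv ℝ (fderiv ℝ f) x u v := by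
    intro u v
    show fderiv ℝ (fun y => fderiv ℝ f y v) x u = _
    rw [show (fun y => fderiv ℝ f y v) = (fun y => (fderiv ℝ f y) ((fun _ => v) y)) from rfl,
      fderiv_clm_apply hd (differentiableAt_const v)]
    simp
  rw [key, key]
  exact (hf.contDiffAt.isSymmSndFDerivAt (by rw [minSmoothness_of_isRCLikeNormedField]; exact WithTop.coe_le_coe.2 le_top)) a b

/-! ### The commutative ring of smooth functions on ℝ³ -/

structure SF : Type where
  f : R3 → ℝ
  sm : Sm f

namespace SF

lemma ext {x y : SF} (h : x.f = y.f) : x = y := by cases x; cases y; cases h; rfl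

instance : Zero SF := ⟨⟨fun _ => 0, contDiff_const⟩⟩
instance : One SF := ⟨⟨fun _ => 1, contDiff_const⟩⟩
instance : Add SF := ⟨fun x y => ⟨fun z => x.f z + y.f z, x.sm.add y.sm⟩⟩
instance : Mul SF := ⟨fun x y => ⟨fun z => x.f z * y.f z, x.sm.mul y.sm⟩⟩
instance : Neg SF := ⟨fun x => ⟨fun z => -x.f z, x.sm.neg⟩⟩
instance : Sub SF := ⟨fun x y => ⟨fun z => x.f z - y.f z, x.sm.sub y.sm⟩⟩
instance : SMul ℕ SF :=
  ⟨fun n x => ⟨fun z => n • x.f z, by simpa [nsmul_eq_mul] using (contDiff_const (c := (n:ℝ))).mul x.sm⟩⟩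
instance : SMul ℤ SF :=
  ⟨fun n x => ⟨fun z => n • x.f z, by simpa [zsmul_eq_mul] using (contDiff_const (c := (n:ℝ))).mul x.sm⟩⟩
instance : Pow SF ℕ := ⟨fun x n => ⟨fun z => x.f z ^ n, x.sm.pow n⟩⟩
instance : NatCast SF := ⟨fun n => ⟨fun _ => n, contDiff_const⟩⟩
instance : IntCast SF := ⟨fun n => ⟨fun _ => n, contDiff_const⟩⟩

lemma injf : Function.Injective SF.f := fun _ _ h => ext h

instance : CommRing SF :=
  Function.Injective.commRing SF.f injf rfl rfl (fun _ _ => rfl) (fun _ _ => rfl)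
    (fun _ => rfl) (fun _ _ => rfl) (fun _ _ => rfl) (fun _ _ => rfl) (fun _ _ => rfl)
    (fun _ => rfl) (fun _ => rfl)

/-- constant smooth function -/
def cst (c : ℝ) : SF := ⟨fun _ => c, contDiff_const⟩

/-- evaluation as a ring homomorphism into functions -/
def fHom : SF →+* (R3 → ℝ) where
  toFun := SF.f
  map_one' := rfl
  map_mul' _ _ := rfl
  map_zero' := rfl
  map_add' _ _ := rfl

@[simp] lemma fHom_apply (x : SF) : fHom x = x.f := rfl

/-- directional derivative -/
def dv (a : R3) (x : SF) : SF := ⟨Dv a x.f, x.sm.dv a⟩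

lemma dv_add (a : R3) (x y : SF) : dv a (x + y) = dv a x + dv a y :=
  ext (Dv_add x.sm y.sm a)

lemma dv_sub (a : R3) (x y : SF) : dv a (x - y) = dv a x - dv a y :=
  ext (Dv_sub x.sm y.sm a)

lemma dv_neg (a : R3) (x : SF) : dv a (-x) = -dv a x :=
  ext (Dv_neg a)

lemma dv_mul (a : R3) (x y : SF) : dv a (x * y) = dv a x * y + x * dv a y :=
  ext (Dv_mul x.sm y.sm a)

lemma Dv_const (a : R3) (c : ℝ) : Dv a (fun _ : R3 => c) = fun _ => (0:ℝ) := by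
  funext x
  show fderiv ℝ (fun _ : R3 => c) x a = 0
  rw [fderiv_fun_const]
  rfl

lemma dv_cst (a : R3) (c : ℝ) : dv a (cst c) = 0 := ext (Dv_const a c)

lemma dv_zero (a : R3) : dv a (0 : SF) = 0 := ext (Dv_const a 0)

lemma dv_swap (a b : R3) (x : SF) : dv a (dv b x) = dv b (dv a x) :=
  ext (Dv_swap x.sm a b)

lemma dv_sum {ι : Type*} (a : R3) (s : Finset ι) (g : ι → SF) :
    dv a (∑ i ∈ s, g i) = ∑ i ∈ s, dv a (g i) := by
  classical
  induction s using Finset.induction with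
  | empty => simpa using dv_zero a
  | insert _ _ h ih => rw [Finset.sum_insert h, Finset.sum_insert h, dv_add, ih]

/-- Poisson bracket -/
def brS (x y : SF) : SF := dv eS x * dv eD y - dv eD x * dv eS y

lemma dv_DS (x : SF) : dv eD (dv eS x) = dv eS (dv eD x) := dv_swap eD eS x

/-- divergence potentials -/
def AAs (u v w : SF) : SF :=
  -(u * w * dv eD (brS v w)) + v * w * dv eD (brS u w) + brS u v * w * dv eD w

def BBs (u v w : SF) : SF :=
  u * w * dv eS (brS v w) - v * w * dv eS (brS u w) - brS u v * w * dv eS w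

/-- The key divergence identity. -/
lemma div_identity (u v w : SF) :
    u * brS (brS v w) w - v * brS (brS u w) w
      = dv eS (AAs u v w) + dv eD (BBs u v w) := by
  simp only [AAs, BBs, brS, dv_add, dv_sub, dv_neg, dv_mul, dv_DS]
  ring

end SF


/-! ### Periodicity -/

def PerS (f : R3 → ℝ) : Prop := ∀ τ σ δ : ℝ, f (τ, σ + 2*π, δ) = f (τ, σ, δ)
def PerD (f : R3 → ℝ) : Prop := ∀ τ σ δ : ℝ, f (τ, σ, δ + 2*π) = f (τ, σ, δ)

lemma Dv_translate {f : R3 → ℝ} (hf : Sm f) (s : R3) (hper : ∀ x, f (x + s) = f x)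
    (a x : R3) : Dv a f (x + s) = Dv a f x := by
  have h1 : HasFDerivAt (fun y : R3 => y + s) (ContinuousLinearMap.id ℝ R3) x :=
    (hasFDerivAt_id x).add_const s
  have h2 := ((hf.dAt (x + s)).hasFDerivAt).comp x h1
  have hfun : (f ∘ fun y : R3 => y + s) = f := funext hper
  rw [hfun] at h2
  show fderiv ℝ f (x + s) a = fderiv ℝ f x a
  rw [h2.fderiv]
  rfl

lemma PerS.dv {f : R3 → ℝ} (hf : Sm f) (hp : PerS f) (a : R3) : PerS (Dv a f) := by
  intro τ σ δ
  have hper : ∀ x : R3, f (x + ((0:ℝ), (2*π:ℝ), (0:ℝ))) = f x := by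
    rintro ⟨t, s, d⟩
    show f (t + 0, s + 2*π, d + 0) = _
    rw [add_zero, add_zero]
    exact hp t s d
  have h := Dv_translate hf _ hper a (τ, σ, δ)
  have hpt : ((τ,σ,δ) : R3) + ((0:ℝ), (2*π:ℝ), (0:ℝ)) = ((τ, σ + 2*π, δ) : R3) := by
    show ((τ + 0, σ + 2*π, δ + 0) : R3) = _
    rw [add_zero, add_zero]
  rwa [hpt] at h

lemma PerD.dv {f : R3 → ℝ} (hf : Sm f) (hp : PerD f) (a : R3) : PerD (Dv a f) := by
  intro τ σ δ
  have hper : ∀ x : R3, f (x + ((0:ℝ), (0:ℝ), (2*π:ℝ))) = f x := by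
    rintro ⟨t, s, d⟩
    show f (t + 0, s + 0, d + 2*π) = _
    rw [add_zero, add_zero]
    exact hp t s d
  have h := Dv_translate hf _ hper a (τ, σ, δ)
  have hpt : ((τ,σ,δ) : R3) + ((0:ℝ), (0:ℝ), (2*π:ℝ)) = ((τ, σ, δ + 2*π) : R3) := by
    show ((τ + 0, σ + 0, δ + 2*π) : R3) = _
    rw [add_zero, add_zero]
  rwa [hpt] at h

namespace SF

def PS (x : SF) : Prop := PerS x.f
def PD (x : SF) : Prop := PerD x.f

lemma PS.dv {x : SF} (hp : PS x) (a : R3) : PS (SF.dv a x) := PerS.dv x.sm hp a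
lemma PD.dv {x : SF} (hp : PD x) (a : R3) : PD (SF.dv a x) := PerD.dv x.sm hp a

lemma PS.mul {x y : SF} (hx : PS x) (hy : PS y) : PS (x * y) := by
  intro τ σ δ; show x.f _ * y.f _ = x.f _ * y.f _; rw [hx τ σ δ, hy τ σ δ]
lemma PD.mul {x y : SF} (hx : PD x) (hy : PD y) : PD (x * y) := by
  intro τ σ δ; show x.f _ * y.f _ = x.f _ * y.f _; rw [hx τ σ δ, hy τ σ δ]
lemma PS.add {x y : SF} (hx : PS x) (hy : PS y) : PS (x + y) := by
  intro τ σ δ; show x.f _ + y.f _ = x.f _ + y.f _; rw [hx τ σ δ, hy τ σ δ]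
lemma PD.add {x y : SF} (hx : PD x) (hy : PD y) : PD (x + y) := by
  intro τ σ δ; show x.f _ + y.f _ = x.f _ + y.f _; rw [hx τ σ δ, hy τ σ δ]
lemma PS.sub {x y : SF} (hx : PS x) (hy : PS y) : PS (x - y) := by
  intro τ σ δ; show x.f _ - y.f _ = x.f _ - y.f _; rw [hx τ σ δ, hy τ σ δ]
lemma PD.sub {x y : SF} (hx : PD x) (hy : PD y) : PD (x - y) := by
  intro τ σ δ; show x.f _ - y.f _ = x.f _ - y.f _; rw [hx τ σ δ, hy τ σ δ]
lemma PS.neg {x : SF} (hx : PS x) : PS (-x) := by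
  intro τ σ δ; show -x.f _ = -x.f _; rw [hx τ σ δ]
lemma PD.neg {x : SF} (hx : PD x) : PD (-x) := by
  intro τ σ δ; show -x.f _ = -x.f _; rw [hx τ σ δ]
lemma PS.cst (c : ℝ) : PS (cst c) := fun _ _ _ => rfl
lemma PD.cst (c : ℝ) : PD (cst c) := fun _ _ _ => rfl

lemma PS.brS {x y : SF} (hx : PS x) (hy : PS y) : PS (SF.brS x y) :=
  ((hx.dv eS).mul (hy.dv eD)).sub ((hx.dv eD).mul (hy.dv eS))
lemma PD.brS {x y : SF} (hx : PD x) (hy : PD y) : PD (SF.brS x y) :=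
  ((hx.dv eS).mul (hy.dv eD)).sub ((hx.dv eD).mul (hy.dv eS))

lemma PS.AAs {u v w : SF} (hu : PS u) (hv : PS v) (hw : PS w) : PS (SF.AAs u v w) :=
  ((((hu.mul hw).mul ((hv.brS hw).dv eD)).neg.add ((hv.mul hw).mul ((hu.brS hw).dv eD))).add
    (((hu.brS hv).mul hw).mul (hw.dv eD)))
lemma PD.BBs {u v w : SF} (hu : PD u) (hv : PD v) (hw : PD w) : PD (SF.BBs u v w) :=
  ((((hu.mul hw).mul ((hv.brS hw).dv eS)).sub ((hv.mul hw).mul ((hu.brS hw).dv eS))).sub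
    (((hu.brS hv).mul hw).mul (hw.dv eS)))

lemma PS.sum {ι : Type*} (s : Finset ι) (g : ι → SF) (hg : ∀ i, PS (g i)) :
    PS (∑ i ∈ s, g i) := by
  classical
  induction s using Finset.induction with
  | empty => exact fun _ _ _ => rfl
  | insert _ _ h ih => rw [Finset.sum_insert h]; exact (hg _).add ih

lemma PD.sum {ι : Type*} (s : Finset ι) (g : ι → SF) (hg : ∀ i, PD (g i)) :
    PD (∑ i ∈ s, g i) := by
  classical
  induction s using Finset.induction with
  | empty => exact fun _ _ _ => rfl
  | insert _ _ h ih => rw [Finset.sum_insert h]; exact (hg _).add ih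

end SF

/-! ### Slice derivatives and continuity -/

lemma hasDerivAt_T {f : R3 → ℝ} (hf : Sm f) (τ σ δ : ℝ) :
    HasDerivAt (fun t => f (t, σ, δ)) (Dv eT f (τ, σ, δ)) τ := by
  have h : HasDerivAt (fun t : ℝ => ((t, σ, δ) : R3)) eT τ :=
    (hasDerivAt_id τ).prodMk ((hasDerivAt_const τ σ).prodMk (hasDerivAt_const τ δ))
  exact ((hf.dAt (τ, σ, δ)).hasFDerivAt).comp_hasDerivAt τ h

lemma hasDerivAt_S {f : R3 → ℝ} (hf : Sm f) (τ σ δ : ℝ) :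
    HasDerivAt (fun s => f (τ, s, δ)) (Dv eS f (τ, σ, δ)) σ := by
  have h : HasDerivAt (fun s : ℝ => ((τ, s, δ) : R3)) eS σ :=
    (hasDerivAt_const σ τ).prodMk ((hasDerivAt_id σ).prodMk (hasDerivAt_const σ δ))
  exact ((hf.dAt (τ, σ, δ)).hasFDerivAt).comp_hasDerivAt σ h

lemma hasDerivAt_D {f : R3 → ℝ} (hf : Sm f) (τ σ δ : ℝ) :
    HasDerivAt (fun d => f (τ, σ, d)) (Dv eD f (τ, σ, δ)) δ := by
  have h : HasDerivAt (fun d : ℝ => ((τ, σ, d) : R3)) eD δ :=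
    (hasDerivAt_const δ τ).prodMk ((hasDerivAt_const δ σ).prodMk (hasDerivAt_id δ))
  exact ((hf.dAt (τ, σ, δ)).hasFDerivAt).comp_hasDerivAt δ h

lemma contSliceD {f : R3 → ℝ} (hc : Continuous f) (τ σ : ℝ) :
    Continuous fun δ => f (τ, σ, δ) :=
  hc.comp (continuous_const.prodMk (continuous_const.prodMk continuous_id))

lemma contSliceS {f : R3 → ℝ} (hc : Continuous f) (τ δ : ℝ) :
    Continuous fun σ => f (τ, σ, δ) :=
  hc.comp (continuous_const.prodMk (continuous_id.prodMk continuous_const))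

lemma contSliceT {f : R3 → ℝ} (hc : Continuous f) (σ δ : ℝ) :
    Continuous fun τ => f (τ, σ, δ) :=
  hc.comp (continuous_id.prodMk (continuous_const.prodMk continuous_const))


/-! ### Integral lemmas -/

open MeasureTheory intervalIntegral

lemma intInt_swap_le {F : ℝ → ℝ → ℝ} (hF : Continuous fun p : ℝ × ℝ => F p.1 p.2)
    {a b c d : ℝ} (hab : a ≤ b) (hcd : c ≤ d) :
    (∫ x in a..b, ∫ y in c..d, F x y) = ∫ y in c..d, ∫ x in a..b, F x y := by
  have hInt : Integrable (Function.uncurry F)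
      ((volume.restrict (Set.Ioc a b)).prod (volume.restrict (Set.Ioc c d))) := by
    rw [Measure.prod_restrict, ← Measure.volume_eq_prod]
    exact ((hF.continuousOn).integrableOn_compact (isCompact_Icc.prod isCompact_Icc)).mono_set
      (Set.prod_mono Set.Ioc_subset_Icc_self Set.Ioc_subset_Icc_self)
  rw [integral_of_le hab]
  simp_rw [integral_of_le hcd]
  rw [MeasureTheory.integral_integral_swap hInt]
  simp_rw [integral_of_le hab]


lemma intInt_swap {F : ℝ → ℝ → ℝ} (hF : Continuous fun p : ℝ × ℝ => F p.1 p.2) (a b c d : ℝ) :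
    (∫ x in a..b, ∫ y in c..d, F x y) = ∫ y in c..d, ∫ x in a..b, F x y := by
  rcases le_total a b with h1 | h1 <;> rcases le_total c d with h2 | h2
  · exact intInt_swap_le hF h1 h2
  · simp_rw [integral_symm d c, intervalIntegral.integral_neg]
    rw [intInt_swap_le hF h1 h2]
  · simp_rw [integral_symm b a, intervalIntegral.integral_neg]
    rw [intInt_swap_le hF h1 h2]
  · simp_rw [integral_symm b a, integral_symm d c, intervalIntegral.integral_neg, neg_neg]
    rw [intInt_swap_le hF h1 h2]

lemma integral_div_zero (A B : SF) (hA : SF.PS A) (hB : SF.PD B) (τ : ℝ) :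
    (∫ σ in (0:ℝ)..(2*π), ∫ δ in (0:ℝ)..(2*π),
      ((SF.dv eS A).f (τ,σ,δ) + (SF.dv eD B).f (τ,σ,δ))) = 0 := by
  have hcA : Continuous (SF.dv eS A).f := (A.sm.dv eS).continuous
  have hcB : Continuous (SF.dv eD B).f := (B.sm.dv eD).continuous
  have hinner : ∀ σ : ℝ, (∫ δ in (0:ℝ)..(2*π),
        ((SF.dv eS A).f (τ,σ,δ) + (SF.dv eD B).f (τ,σ,δ)))
      = ∫ δ in (0:ℝ)..(2*π), (SF.dv eS A).f (τ,σ,δ) := by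
    intro σ
    rw [integral_add ((contSliceD hcA τ σ).intervalIntegrable _ _)
      ((contSliceD hcB τ σ).intervalIntegrable _ _)]
    have hB0 : (∫ δ in (0:ℝ)..(2*π), (SF.dv eD B).f (τ,σ,δ))
        = B.f (τ,σ,2*π) - B.f (τ,σ,0) :=
      integral_eq_sub_of_hasDerivAt (fun δ _ => hasDerivAt_D B.sm τ σ δ)
        ((contSliceD hcB τ σ).intervalIntegrable _ _)
    have hper : B.f (τ,σ,2*π) = B.f (τ,σ,0) := by simpa using hB τ σ 0
    rw [hB0, hper, sub_self, add_zero]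
  have hA0 : ∀ δ : ℝ, (∫ σ in (0:ℝ)..(2*π), (SF.dv eS A).f (τ,σ,δ)) = 0 := by
    intro δ
    rw [show (∫ σ in (0:ℝ)..(2*π), (SF.dv eS A).f (τ,σ,δ)) = A.f (τ,2*π,δ) - A.f (τ,0,δ) from
      integral_eq_sub_of_hasDerivAt (fun σ _ => hasDerivAt_S A.sm τ σ δ)
        ((contSliceS hcA τ δ).intervalIntegrable _ _)]
    have hper : A.f (τ,2*π,δ) = A.f (τ,0,δ) := by simpa using hA τ 0 δ
    rw [hper, sub_self]
  calc (∫ σ in (0:ℝ)..(2*π), ∫ δ in (0:ℝ)..(2*π),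
          ((SF.dv eS A).f (τ,σ,δ) + (SF.dv eD B).f (τ,σ,δ)))
      = ∫ σ in (0:ℝ)..(2*π), ∫ δ in (0:ℝ)..(2*π), (SF.dv eS A).f (τ,σ,δ) :=
        integral_congr (fun σ _ => hinner σ)
    _ = ∫ δ in (0:ℝ)..(2*π), ∫ σ in (0:ℝ)..(2*π), (SF.dv eS A).f (τ,σ,δ) :=
        intInt_swap (F := fun σ δ => (SF.dv eS A).f (τ,σ,δ))
          (hcA.comp (continuous_const.prodMk (continuous_fst.prodMk continuous_snd))) 0 (2*π) 0 (2*π)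
    _ = ∫ δ in (0:ℝ)..(2*π), (0:ℝ) := integral_congr (fun δ _ => hA0 δ)
    _ = 0 := by simp

lemma conserved_core (g : SF)
    (hAB : ∀ t : ℝ, (∫ σ in (0:ℝ)..(2*π), ∫ δ in (0:ℝ)..(2*π), (SF.dv eT g).f (t,σ,δ)) = 0)
    (τ₁ τ₂ : ℝ) :
    (∫ σ in (0:ℝ)..(2*π), ∫ δ in (0:ℝ)..(2*π), g.f (τ₁,σ,δ))
      = ∫ σ in (0:ℝ)..(2*π), ∫ δ in (0:ℝ)..(2*π), g.f (τ₂,σ,δ) := by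
  have hcG : Continuous (SF.dv eT g).f := (g.sm.dv eT).continuous
  have hcg : Continuous g.f := g.sm.continuous
  -- integrability of the parametric inner integrals
  have hparam : ∀ τ : ℝ, Continuous fun σ => ∫ δ in (0:ℝ)..(2*π), g.f (τ,σ,δ) := by
    intro τ
    exact continuous_parametric_intervalIntegral_of_continuous'
      (f := fun σ δ => g.f (τ,σ,δ))
      (hcg.comp (continuous_const.prodMk (continuous_fst.prodMk continuous_snd))) 0 (2*π)
  -- FTC in τ for each (σ,δ)
  have hftc : ∀ σ δ : ℝ, g.f (τ₂,σ,δ) - g.f (τ₁,σ,δ)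
      = ∫ t in τ₁..τ₂, (SF.dv eT g).f (t,σ,δ) := fun σ δ =>
    (integral_eq_sub_of_hasDerivAt (fun t _ => hasDerivAt_T g.sm t σ δ)
      ((contSliceT hcG σ δ).intervalIntegrable _ _)).symm
  have hdiff : (∫ σ in (0:ℝ)..(2*π), ∫ δ in (0:ℝ)..(2*π), g.f (τ₂,σ,δ))
      - (∫ σ in (0:ℝ)..(2*π), ∫ δ in (0:ℝ)..(2*π), g.f (τ₁,σ,δ))
      = ∫ σ in (0:ℝ)..(2*π), ∫ δ in (0:ℝ)..(2*π), ∫ t in τ₁..τ₂, (SF.dv eT g).f (t,σ,δ) := by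
    rw [← integral_sub ((hparam τ₂).intervalIntegrable _ _) ((hparam τ₁).intervalIntegrable _ _)]
    apply integral_congr
    intro σ _
    dsimp only
    rw [← integral_sub ((contSliceD hcg τ₂ σ).intervalIntegrable _ _)
      ((contSliceD hcg τ₁ σ).intervalIntegrable _ _)]
    apply integral_congr
    intro δ _
    exact hftc σ δ
  -- swap the τ-integral to the outside
  have hswap1 : ∀ σ : ℝ, (∫ δ in (0:ℝ)..(2*π), ∫ t in τ₁..τ₂, (SF.dv eT g).f (t,σ,δ))
      = ∫ t in τ₁..τ₂, ∫ δ in (0:ℝ)..(2*π), (SF.dv eT g).f (t,σ,δ) := by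
    intro σ
    exact intInt_swap (F := fun δ t => (SF.dv eT g).f (t,σ,δ))
      (hcG.comp ((continuous_snd).prodMk (continuous_const.prodMk continuous_fst)))
      0 (2*π) τ₁ τ₂
  have hswap2 : (∫ σ in (0:ℝ)..(2*π), ∫ t in τ₁..τ₂,
        ∫ δ in (0:ℝ)..(2*π), (SF.dv eT g).f (t,σ,δ))
      = ∫ t in τ₁..τ₂, ∫ σ in (0:ℝ)..(2*π), ∫ δ in (0:ℝ)..(2*π), (SF.dv eT g).f (t,σ,δ) := by
    refine intInt_swap (F := fun σ t => ∫ δ in (0:ℝ)..(2*π), (SF.dv eT g).f (t,σ,δ)) ?_ 0 (2*π) τ₁ τ₂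
    exact continuous_parametric_intervalIntegral_of_continuous'
      (f := fun p : ℝ × ℝ => fun δ => (SF.dv eT g).f (p.2, p.1, δ))
      (hcG.comp ((continuous_snd.comp continuous_fst).prodMk
        ((continuous_fst.comp continuous_fst).prodMk continuous_snd))) 0 (2*π)
  have : (∫ σ in (0:ℝ)..(2*π), ∫ δ in (0:ℝ)..(2*π), g.f (τ₂,σ,δ))
      - (∫ σ in (0:ℝ)..(2*π), ∫ δ in (0:ℝ)..(2*π), g.f (τ₁,σ,δ)) = 0 := by
    rw [hdiff]
    calc (∫ σ in (0:ℝ)..(2*π), ∫ δ in (0:ℝ)..(2*π), ∫ t in τ₁..τ₂, (SF.dv eT g).f (t,σ,δ))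
        = ∫ σ in (0:ℝ)..(2*π), ∫ t in τ₁..τ₂, ∫ δ in (0:ℝ)..(2*π), (SF.dv eT g).f (t,σ,δ) :=
          integral_congr (fun σ _ => hswap1 σ)
      _ = ∫ t in τ₁..τ₂, ∫ σ in (0:ℝ)..(2*π), ∫ δ in (0:ℝ)..(2*π), (SF.dv eT g).f (t,σ,δ) :=
          hswap2
      _ = ∫ t in τ₁..τ₂, (0:ℝ) := integral_congr (fun t _ => hAB t)
      _ = 0 := by simp
  linarith [this]


lemma brS_cst (k : ℝ) (x y : SF) : SF.brS x (SF.cst k * y) = SF.cst k * SF.brS x y := by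
  simp only [SF.brS, SF.dv_mul, SF.dv_cst]
  ring

lemma conserved {ι κ : Type*} [Fintype ι] [Fintype κ]
    (Z : ι → SF) (W : κ → SF) (c : ι → ℝ) (c' : κ → ℝ) (Λ : R3 → ℝ)
    (pZs : ∀ μ, SF.PS (Z μ)) (pZd : ∀ μ, SF.PD (Z μ))
    (pWs : ∀ i, SF.PS (W i)) (pWd : ∀ i, SF.PD (W i))
    (hEoM : ∀ μ x, (SF.dv eT (SF.dv eT (Z μ))).f x
       = (∑ ρ, SF.brS (SF.brS (Z μ) (Z ρ)) (SF.cst (c ρ) * Z ρ)).f x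
         + (∑ i, SF.brS (SF.brS (Z μ) (W i)) (SF.cst (c' i) * W i)).f x + Λ x * (Z μ).f x)
    (μ ν : ι) (τ₁ τ₂ : ℝ) :
    (∫ σ in (0:ℝ)..(2*π), ∫ δ in (0:ℝ)..(2*π),
      (Z μ * SF.dv eT (Z ν) - Z ν * SF.dv eT (Z μ)).f (τ₁,σ,δ))
    = ∫ σ in (0:ℝ)..(2*π), ∫ δ in (0:ℝ)..(2*π),
      (Z μ * SF.dv eT (Z ν) - Z ν * SF.dv eT (Z μ)).f (τ₂,σ,δ) := by
  classical
  -- move the constants out of the brackets in the equations of motion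
  have hsum : ∀ α : ι, (∑ ρ, SF.brS (SF.brS (Z α) (Z ρ)) (SF.cst (c ρ) * Z ρ))
      = ∑ ρ, SF.cst (c ρ) * SF.brS (SF.brS (Z α) (Z ρ)) (Z ρ) :=
    fun α => Finset.sum_congr rfl (fun ρ _ => brS_cst (c ρ) _ _)
  have hsum' : ∀ α : ι, (∑ i, SF.brS (SF.brS (Z α) (W i)) (SF.cst (c' i) * W i))
      = ∑ i, SF.cst (c' i) * SF.brS (SF.brS (Z α) (W i)) (W i) :=
    fun α => Finset.sum_congr rfl (fun i _ => brS_cst (c' i) _ _)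
  have hEoM' : ∀ α x, (SF.dv eT (SF.dv eT (Z α))).f x
      = (∑ ρ, SF.cst (c ρ) * SF.brS (SF.brS (Z α) (Z ρ)) (Z ρ)).f x
        + (∑ i, SF.cst (c' i) * SF.brS (SF.brS (Z α) (W i)) (W i)).f x + Λ x * (Z α).f x := by
    intro α x
    rw [hEoM α x, hsum α, hsum' α]
  -- the divergence potentials
  set AAA : SF := (∑ ρ, SF.cst (c ρ) * SF.AAs (Z μ) (Z ν) (Z ρ))
    + ∑ i, SF.cst (c' i) * SF.AAs (Z μ) (Z ν) (W i) with hAAA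
  set BBB : SF := (∑ ρ, SF.cst (c ρ) * SF.BBs (Z μ) (Z ν) (Z ρ))
    + ∑ i, SF.cst (c' i) * SF.BBs (Z μ) (Z ν) (W i) with hBBB
  -- SF-level algebra: the time derivative of the charge density is a divergence
  have e1 : SF.dv eT (Z μ * SF.dv eT (Z ν) - Z ν * SF.dv eT (Z μ))
      = Z μ * SF.dv eT (SF.dv eT (Z ν)) - Z ν * SF.dv eT (SF.dv eT (Z μ)) := by
    rw [SF.dv_sub, SF.dv_mul, SF.dv_mul]
    ring
  have hterm : ∀ ρ : ι, SF.dv eS (SF.cst (c ρ) * SF.AAs (Z μ) (Z ν) (Z ρ))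
      + SF.dv eD (SF.cst (c ρ) * SF.BBs (Z μ) (Z ν) (Z ρ))
      = SF.cst (c ρ) * (Z μ * SF.brS (SF.brS (Z ν) (Z ρ)) (Z ρ)
        - Z ν * SF.brS (SF.brS (Z μ) (Z ρ)) (Z ρ)) := by
    intro ρ
    rw [SF.dv_mul, SF.dv_mul]
    simp only [SF.dv_cst]
    rw [SF.div_identity (Z μ) (Z ν) (Z ρ)]
    ring
  have hterm' : ∀ i : κ, SF.dv eS (SF.cst (c' i) * SF.AAs (Z μ) (Z ν) (W i))
      + SF.dv eD (SF.cst (c' i) * SF.BBs (Z μ) (Z ν) (W i))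
      = SF.cst (c' i) * (Z μ * SF.brS (SF.brS (Z ν) (W i)) (W i)
        - Z ν * SF.brS (SF.brS (Z μ) (W i)) (W i)) := by
    intro i
    rw [SF.dv_mul, SF.dv_mul]
    simp only [SF.dv_cst]
    rw [SF.div_identity (Z μ) (Z ν) (W i)]
    ring
  have e2 : SF.dv eS AAA + SF.dv eD BBB
      = Z μ * (∑ ρ, SF.cst (c ρ) * SF.brS (SF.brS (Z ν) (Z ρ)) (Z ρ))
          - Z ν * (∑ ρ, SF.cst (c ρ) * SF.brS (SF.brS (Z μ) (Z ρ)) (Z ρ))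
        + (Z μ * (∑ i, SF.cst (c' i) * SF.brS (SF.brS (Z ν) (W i)) (W i))
          - Z ν * (∑ i, SF.cst (c' i) * SF.brS (SF.brS (Z μ) (W i)) (W i))) := by
    rw [hAAA, hBBB, SF.dv_add, SF.dv_add, SF.dv_sum, SF.dv_sum, SF.dv_sum, SF.dv_sum]
    have hL : ((∑ ρ, SF.dv eS (SF.cst (c ρ) * SF.AAs (Z μ) (Z ν) (Z ρ)))
          + ∑ i, SF.dv eS (SF.cst (c' i) * SF.AAs (Z μ) (Z ν) (W i)))
        + ((∑ ρ, SF.dv eD (SF.cst (c ρ) * SF.BBs (Z μ) (Z ν) (Z ρ)))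
          + ∑ i, SF.dv eD (SF.cst (c' i) * SF.BBs (Z μ) (Z ν) (W i)))
        = (∑ ρ, (SF.dv eS (SF.cst (c ρ) * SF.AAs (Z μ) (Z ν) (Z ρ))
            + SF.dv eD (SF.cst (c ρ) * SF.BBs (Z μ) (Z ν) (Z ρ))))
          + ∑ i, (SF.dv eS (SF.cst (c' i) * SF.AAs (Z μ) (Z ν) (W i))
            + SF.dv eD (SF.cst (c' i) * SF.BBs (Z μ) (Z ν) (W i))) := by
      rw [Finset.sum_add_distrib, Finset.sum_add_distrib]
      ring
    rw [hL, Finset.sum_congr rfl (fun ρ _ => hterm ρ), Finset.sum_congr rfl (fun i _ => hterm' i)]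
    rw [Finset.mul_sum, Finset.mul_sum, Finset.mul_sum, Finset.mul_sum,
      ← Finset.sum_sub_distrib, ← Finset.sum_sub_distrib]
    refine congrArg₂ (· + ·) ?_ ?_ <;> exact Finset.sum_congr rfl (fun _ _ => by ring)
  -- pointwise key identity
  have key : ∀ x : R3, (SF.dv eT (Z μ * SF.dv eT (Z ν) - Z ν * SF.dv eT (Z μ))).f x
      = (SF.dv eS AAA).f x + (SF.dv eD BBB).f x := by
    intro x
    have step1 : (SF.dv eT (Z μ * SF.dv eT (Z ν) - Z ν * SF.dv eT (Z μ))).f x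
        = (Z μ).f x * (SF.dv eT (SF.dv eT (Z ν))).f x
          - (Z ν).f x * (SF.dv eT (SF.dv eT (Z μ))).f x := by
      rw [e1]; rfl
    rw [step1, hEoM' ν x, hEoM' μ x]
    have step2 : (SF.dv eS AAA).f x + (SF.dv eD BBB).f x
        = (SF.dv eS AAA + SF.dv eD BBB).f x := rfl
    rw [step2, e2]
    show _ = ((Z μ).f x * (∑ ρ, SF.cst (c ρ) * SF.brS (SF.brS (Z ν) (Z ρ)) (Z ρ)).f x
          - (Z ν).f x * (∑ ρ, SF.cst (c ρ) * SF.brS (SF.brS (Z μ) (Z ρ)) (Z ρ)).f x)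
        + ((Z μ).f x * (∑ i, SF.cst (c' i) * SF.brS (SF.brS (Z ν) (W i)) (W i)).f x
          - (Z ν).f x * (∑ i, SF.cst (c' i) * SF.brS (SF.brS (Z μ) (W i)) (W i)).f x)
    ring
  -- conservation via the divergence theorem on the torus
  apply conserved_core
  intro t
  have hPSAAA : SF.PS AAA := by
    rw [hAAA]
    exact SF.PS.add
      (SF.PS.sum _ _ (fun ρ => (SF.PS.cst _).mul
        (SF.PS.AAs (pZs μ) (pZs ν) (pZs ρ))))
      (SF.PS.sum _ _ (fun i => (SF.PS.cst _).mul
        (SF.PS.AAs (pZs μ) (pZs ν) (pWs i))))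
  have hPDBBB : SF.PD BBB := by
    rw [hBBB]
    exact SF.PD.add
      (SF.PD.sum _ _ (fun ρ => (SF.PD.cst _).mul
        (SF.PD.BBs (pZd μ) (pZd ν) (pZd ρ))))
      (SF.PD.sum _ _ (fun i => (SF.PD.cst _).mul
        (SF.PD.BBs (pZd μ) (pZd ν) (pWd i))))
  calc (∫ σ in (0:ℝ)..(2*π), ∫ δ in (0:ℝ)..(2*π),
        (SF.dv eT (Z μ * SF.dv eT (Z ν) - Z ν * SF.dv eT (Z μ))).f (t,σ,δ))
      = ∫ σ in (0:ℝ)..(2*π), ∫ δ in (0:ℝ)..(2*π),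
        ((SF.dv eS AAA).f (t,σ,δ) + (SF.dv eD BBB).f (t,σ,δ)) := by
        apply integral_congr
        intro σ _
        apply integral_congr
        intro δ _
        exact key (t,σ,δ)
    _ = 0 := integral_div_zero AAA BBB hPSAAA hPDBBB t


lemma SF.f_sum {ι : Type*} (s : Finset ι) (g : ι → SF) (z : R3) :
    (∑ i ∈ s, g i).f z = ∑ i ∈ s, (g i).f z := by
  classical
  induction s using Finset.induction with
  | empty => rfl
  | insert _ _ h ih => rw [Finset.sum_insert h, Finset.sum_insert h, ← ih]; rfl

lemma pb_eq_brS (x y : SF) (F G : ℝ → ℝ → ℝ → ℝ)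
    (hF : ∀ τ σ δ : ℝ, F τ σ δ = x.f (τ,σ,δ)) (hG : ∀ τ σ δ : ℝ, G τ σ δ = y.f (τ,σ,δ))
    (τ σ δ : ℝ) : pb F G τ σ δ = (SF.brS x y).f (τ,σ,δ) := by
  have hF1 : (fun s => F τ s δ) = (fun s => x.f (τ,s,δ)) := funext fun s => hF τ s δ
  have hF2 : (fun d => F τ σ d) = (fun d => x.f (τ,σ,d)) := funext fun d => hF τ σ d
  have hG1 : (fun s => G τ s δ) = (fun s => y.f (τ,s,δ)) := funext fun s => hG τ s δ
  have hG2 : (fun d => G τ σ d) = (fun d => y.f (τ,σ,d)) := funext fun d => hG τ σ d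
  simp only [pb]
  rw [hF1, hF2, hG1, hG2, (hasDerivAt_S x.sm τ σ δ).deriv, (hasDerivAt_D y.sm τ σ δ).deriv,
    (hasDerivAt_D x.sm τ σ δ).deriv, (hasDerivAt_S y.sm τ σ δ).deriv]
  rfl

end NA

/-- For a doubly 2π-periodic smooth membrane solution of the gauge-fixed
equations of motion on AdS_{p+2} × S^q, the Noether charges S^{μν} and J^{ij} are
conserved (independent of τ). -/
theorem noether_charges_conserved (p q : ℕ)
    (Yh : ℝ → ℝ → ℝ → Fin (p + 3) → ℝ) (X : ℝ → ℝ → ℝ → Fin (q + 1) → ℝ)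
    (Λh Λt : ℝ → ℝ → ℝ → ℝ)
    (hY_smooth : ∀ μ, ContDiff ℝ (⊤ : ℕ∞) (fun z : ℝ × ℝ × ℝ => Yh z.1 z.2.1 z.2.2 μ))
    (hX_smooth : ∀ i, ContDiff ℝ (⊤ : ℕ∞) (fun z : ℝ × ℝ × ℝ => X z.1 z.2.1 z.2.2 i))
    (hY_per_σ : ∀ τ σ δ μ, Yh τ (σ + 2 * π) δ μ = Yh τ σ δ μ)
    (hY_per_δ : ∀ τ σ δ μ, Yh τ σ (δ + 2 * π) μ = Yh τ σ δ μ)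
    (hX_per_σ : ∀ τ σ δ i, X τ (σ + 2 * π) δ i = X τ σ δ i)
    (hX_per_δ : ∀ τ σ δ i, X τ σ (δ + 2 * π) i = X τ σ δ i)
    -- (i) AdS equations of motion
    (hEoMY : ∀ τ σ δ μ,
      deriv (fun t => deriv (fun t' => Yh t' σ δ μ) t) τ
        = (∑ ν, pb (pb (fun τ σ δ => Yh τ σ δ μ) (fun τ σ δ => Yh τ σ δ ν))
            (fun τ σ δ => etaSign p ν * Yh τ σ δ ν) τ σ δ)
          + (∑ i, pb (pb (fun τ σ δ => Yh τ σ δ μ) (fun τ σ δ => X τ σ δ i))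
            (fun τ σ δ => X τ σ δ i) τ σ δ)
          + Λh τ σ δ * Yh τ σ δ μ)
    -- (ii) sphere equations of motion
    (hEoMX : ∀ τ σ δ i,
      deriv (fun t => deriv (fun t' => X t' σ δ i) t) τ
        = (∑ j, pb (pb (fun τ σ δ => X τ σ δ i) (fun τ σ δ => X τ σ δ j))
            (fun τ σ δ => X τ σ δ j) τ σ δ)
          + (∑ ν, pb (pb (fun τ σ δ => X τ σ δ i) (fun τ σ δ => Yh τ σ δ ν))
            (fun τ σ δ => etaSign p ν * Yh τ σ δ ν) τ σ δ)
          + Λt τ σ δ * X τ σ δ i) :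
    (∀ (μ ν : Fin (p + 3)) (τ₁ τ₂ : ℝ),
      (∫ σ in (0:ℝ)..(2 * π), ∫ δ in (0:ℝ)..(2 * π),
        (Yh τ₁ σ δ μ * deriv (fun t => Yh t σ δ ν) τ₁
          - Yh τ₁ σ δ ν * deriv (fun t => Yh t σ δ μ) τ₁))
      = ∫ σ in (0:ℝ)..(2 * π), ∫ δ in (0:ℝ)..(2 * π),
        (Yh τ₂ σ δ μ * deriv (fun t => Yh t σ δ ν) τ₂
          - Yh τ₂ σ δ ν * deriv (fun t => Yh t σ δ μ) τ₂)) ∧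
    (∀ (i j : Fin (q + 1)) (τ₁ τ₂ : ℝ),
      (∫ σ in (0:ℝ)..(2 * π), ∫ δ in (0:ℝ)..(2 * π),
        (X τ₁ σ δ i * deriv (fun t => X t σ δ j) τ₁
          - X τ₁ σ δ j * deriv (fun t => X t σ δ i) τ₁))
      = ∫ σ in (0:ℝ)..(2 * π), ∫ δ in (0:ℝ)..(2 * π),
        (X τ₂ σ δ i * deriv (fun t => X t σ δ j) τ₂
          - X τ₂ σ δ j * deriv (fun t => X t σ δ i) τ₂)) := by
  let ZY : Fin (p+3) → NA.SF := fun μ => ⟨fun z => Yh z.1 z.2.1 z.2.2 μ, hY_smooth μ⟩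
  let ZX : Fin (q+1) → NA.SF := fun i => ⟨fun z => X z.1 z.2.1 z.2.2 i, hX_smooth i⟩
  have pYs : ∀ μ, NA.SF.PS (ZY μ) := fun μ τ σ δ => hY_per_σ τ σ δ μ
  have pYd : ∀ μ, NA.SF.PD (ZY μ) := fun μ τ σ δ => hY_per_δ τ σ δ μ
  have pXs : ∀ i, NA.SF.PS (ZX i) := fun i τ σ δ => hX_per_σ τ σ δ i
  have pXd : ∀ i, NA.SF.PD (ZX i) := fun i τ σ δ => hX_per_δ τ σ δ i
  -- equations of motion in SF form
  have hEoMY' : ∀ (α : Fin (p+3)) (x : NA.R3),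
      (NA.SF.dv NA.eT (NA.SF.dv NA.eT (ZY α))).f x
      = (∑ ρ, NA.SF.brS (NA.SF.brS (ZY α) (ZY ρ)) (NA.SF.cst (etaSign p ρ) * ZY ρ)).f x
        + (∑ i, NA.SF.brS (NA.SF.brS (ZY α) (ZX i)) (NA.SF.cst 1 * ZX i)).f x
        + Λh x.1 x.2.1 x.2.2 * (ZY α).f x := by
    intro α x
    obtain ⟨τ, σ, δ⟩ := x
    have hL : (NA.SF.dv NA.eT (NA.SF.dv NA.eT (ZY α))).f (τ,σ,δ)
        = deriv (fun t => deriv (fun t' => Yh t' σ δ α) t) τ := by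
      have h1 : (fun t => deriv (fun t' => Yh t' σ δ α) t)
          = fun t => (NA.SF.dv NA.eT (ZY α)).f (t,σ,δ) :=
        funext fun t => (NA.hasDerivAt_T (ZY α).sm t σ δ).deriv
      rw [h1]
      exact ((NA.hasDerivAt_T (NA.SF.dv NA.eT (ZY α)).sm τ σ δ).deriv).symm
    rw [hL, hEoMY τ σ δ α, NA.SF.f_sum, NA.SF.f_sum]
    congr 1
    congr 1
    · exact Finset.sum_congr rfl fun ρ _ =>
        NA.pb_eq_brS (NA.SF.brS (ZY α) (ZY ρ)) (NA.SF.cst (etaSign p ρ) * ZY ρ) _ _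
          (fun τ σ δ => NA.pb_eq_brS (ZY α) (ZY ρ) _ _
            (fun _ _ _ => rfl) (fun _ _ _ => rfl) τ σ δ)
          (fun _ _ _ => rfl) τ σ δ
    · exact Finset.sum_congr rfl fun i _ =>
        NA.pb_eq_brS (NA.SF.brS (ZY α) (ZX i)) (NA.SF.cst 1 * ZX i) _ _
          (fun τ σ δ => NA.pb_eq_brS (ZY α) (ZX i) _ _
            (fun _ _ _ => rfl) (fun _ _ _ => rfl) τ σ δ)
          (fun _ _ _ => (one_mul _).symm) τ σ δ
  have hEoMX' : ∀ (α : Fin (q+1)) (x : NA.R3),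
      (NA.SF.dv NA.eT (NA.SF.dv NA.eT (ZX α))).f x
      = (∑ j, NA.SF.brS (NA.SF.brS (ZX α) (ZX j)) (NA.SF.cst 1 * ZX j)).f x
        + (∑ ρ, NA.SF.brS (NA.SF.brS (ZX α) (ZY ρ)) (NA.SF.cst (etaSign p ρ) * ZY ρ)).f x
        + Λt x.1 x.2.1 x.2.2 * (ZX α).f x := by
    intro α x
    obtain ⟨τ, σ, δ⟩ := x
    have hL : (NA.SF.dv NA.eT (NA.SF.dv NA.eT (ZX α))).f (τ,σ,δ)
        = deriv (fun t => deriv (fun t' => X t' σ δ α) t) τ := by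
      have h1 : (fun t => deriv (fun t' => X t' σ δ α) t)
          = fun t => (NA.SF.dv NA.eT (ZX α)).f (t,σ,δ) :=
        funext fun t => (NA.hasDerivAt_T (ZX α).sm t σ δ).deriv
      rw [h1]
      exact ((NA.hasDerivAt_T (NA.SF.dv NA.eT (ZX α)).sm τ σ δ).deriv).symm
    rw [hL, hEoMX τ σ δ α, NA.SF.f_sum, NA.SF.f_sum]
    congr 1
    congr 1
    · exact Finset.sum_congr rfl fun j _ =>
        NA.pb_eq_brS (NA.SF.brS (ZX α) (ZX j)) (NA.SF.cst 1 * ZX j) _ _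
          (fun τ σ δ => NA.pb_eq_brS (ZX α) (ZX j) _ _
            (fun _ _ _ => rfl) (fun _ _ _ => rfl) τ σ δ)
          (fun _ _ _ => (one_mul _).symm) τ σ δ
    · exact Finset.sum_congr rfl fun ρ _ =>
        NA.pb_eq_brS (NA.SF.brS (ZX α) (ZY ρ)) (NA.SF.cst (etaSign p ρ) * ZY ρ) _ _
          (fun τ σ δ => NA.pb_eq_brS (ZX α) (ZY ρ) _ _
            (fun _ _ _ => rfl) (fun _ _ _ => rfl) τ σ δ)
          (fun _ _ _ => rfl) τ σ δ
  constructor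
  · intro μ ν τ₁ τ₂
    have hconv : ∀ τ : ℝ,
        (∫ σ in (0:ℝ)..(2 * π), ∫ δ in (0:ℝ)..(2 * π),
          (Yh τ σ δ μ * deriv (fun t => Yh t σ δ ν) τ
            - Yh τ σ δ ν * deriv (fun t => Yh t σ δ μ) τ))
        = ∫ σ in (0:ℝ)..(2 * π), ∫ δ in (0:ℝ)..(2 * π),
          (ZY μ * NA.SF.dv NA.eT (ZY ν) - ZY ν * NA.SF.dv NA.eT (ZY μ)).f (τ,σ,δ) := by
      intro τ
      apply intervalIntegral.integral_congr
      intro σ _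
      apply intervalIntegral.integral_congr
      intro δ _
      dsimp only
      have h1 : deriv (fun t => Yh t σ δ ν) τ = NA.Dv NA.eT (ZY ν).f (τ,σ,δ) :=
        (NA.hasDerivAt_T (ZY ν).sm τ σ δ).deriv
      have h2 : deriv (fun t => Yh t σ δ μ) τ = NA.Dv NA.eT (ZY μ).f (τ,σ,δ) :=
        (NA.hasDerivAt_T (ZY μ).sm τ σ δ).deriv
      rw [h1, h2]
      rfl
    rw [hconv τ₁, hconv τ₂]
    exact NA.conserved ZY ZX (fun ρ => etaSign p ρ) (fun _ => 1)
      (fun z => Λh z.1 z.2.1 z.2.2) pYs pYd pXs pXd hEoMY' μ ν τ₁ τ₂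
  · intro i j τ₁ τ₂
    have hconv : ∀ τ : ℝ,
        (∫ σ in (0:ℝ)..(2 * π), ∫ δ in (0:ℝ)..(2 * π),
          (X τ σ δ i * deriv (fun t => X t σ δ j) τ
            - X τ σ δ j * deriv (fun t => X t σ δ i) τ))
        = ∫ σ in (0:ℝ)..(2 * π), ∫ δ in (0:ℝ)..(2 * π),
          (ZX i * NA.SF.dv NA.eT (ZX j) - ZX j * NA.SF.dv NA.eT (ZX i)).f (τ,σ,δ) := by
      intro τ
      apply intervalIntegral.integral_congr
      intro σ _
      apply intervalIntegral.integral_congr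
      intro δ _
      dsimp only
      have h1 : deriv (fun t => X t σ δ j) τ = NA.Dv NA.eT (ZX j).f (τ,σ,δ) :=
        (NA.hasDerivAt_T (ZX j).sm τ σ δ).deriv
      have h2 : deriv (fun t => X t σ δ i) τ = NA.Dv NA.eT (ZX i).f (τ,σ,δ) :=
        (NA.hasDerivAt_T (ZX i).sm τ σ δ).deriv
      rw [h1, h2]
      rfl
    rw [hconv τ₁, hconv τ₂]
    exact NA.conserved ZX ZY (fun _ => 1) (fun ρ => etaSign p ρ)
      (fun z => Λt z.1 z.2.1 z.2.2) pXs pXd pYs pYd hEoMX' i j τ₁ τ₂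
end
end

section
/- Let ω > 1 and κ > 0, and let ρ : ℝ → ℝ be twice differentiable with ρ''(σ) = −κ²(ω² − 1) sinh ρ(σ) cosh ρ(σ) and ρ'(σ)² = κ²(cosh²ρ(σ) − ω² sinh²ρ(σ)) for all σ. Define Y : ℝ² → ℝ^8 by Y(τ,σ) = 2(cosh ρ(σ) cos κτ, sinh ρ(σ) cos κωτ, sinh ρ(σ) sin κωτ, 0, 0, 0, 0, cosh ρ(σ) sin κτ). Then Y together with Λ(τ,σ) := −2ρ'(σ)² satisfies the conformal-gauge string system on AdS₇ of radius ℓ = 2 (with p = 5); in particular the induced multiplier is Λ̃ = η(∂σY,∂σY) = 4ρ'². -/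
noncomputable section

open Real

/-! Each nonzero component of the ansatz is a product `2 · A(ρ σ) · B(k τ)` with `A ∈ {cosh, sinh}`,
`B ∈ {cos, sin}` and frequency `k ∈ {κ, κω}`, on which the wave operator acts as `A·B'' − A''·B`.
The two ODEs for `ρ`, together with `cosh² − sinh² = 1`, give `(cosh ρ)'' = (2ρ'² − κ²) cosh ρ` and
`(sinh ρ)'' = (2ρ'² − κ²ω²) sinh ρ`, so the frequencies cancel and every component has the same
multiplier `Λ = −2ρ'²`. The constraints reduce to `cos² + sin² = 1` and `cosh² − sinh² = 1`, and for
the Virasoro sum `η(Ẏ,Ẏ) + η(Y',Y') = 4κ²(ω² sinh² ρ − cosh² ρ) + 4ρ'²` to the first-order ODE. -/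

lemma deriv_cos_const_mul (k : ℝ) :
    deriv (fun t => cos (k * t)) = fun t => -(k * sin (k * t)) := by
  funext t
  exact (((hasDerivAt_id' t).const_mul k).cos).deriv.trans (by ring)

lemma deriv_sin_const_mul (k : ℝ) :
    deriv (fun t => sin (k * t)) = fun t => k * cos (k * t) := by
  funext t
  exact (((hasDerivAt_id' t).const_mul k).sin).deriv.trans (by ring)

lemma deriv_deriv_cos_const_mul (k t : ℝ) :
    deriv (deriv fun t => cos (k * t)) t = -k ^ 2 * cos (k * t) := by
  rw [deriv_cos_const_mul, deriv.fun_neg, deriv_const_mul_field, deriv_sin_const_mul]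
  ring

lemma deriv_deriv_sin_const_mul (k t : ℝ) :
    deriv (deriv fun t => sin (k * t)) t = -k ^ 2 * sin (k * t) := by
  rw [deriv_sin_const_mul, deriv_const_mul_field, deriv_cos_const_mul]
  ring

lemma wave_eq_of_separable (c : ℝ) {A B : ℝ → ℝ} {k Λ τ σ : ℝ}
    (hA : deriv (deriv A) σ = -(Λ + k ^ 2) * A σ) (hB : deriv (deriv B) τ = -k ^ 2 * B τ) :
    deriv (fun t => deriv (fun t' => c * A σ * B t') t) τ
      - deriv (fun s => deriv (fun s' => c * A s' * B τ) s) σ = Λ * (c * A σ * B τ) := by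
  simp only [deriv_const_mul_field, deriv_mul_const_field]
  rw [hA, hB]
  ring

lemma etaForm_five (u v : Fin 8 → ℝ) :
    etaForm 5 u v = -(u 0 * v 0) + u 1 * v 1 + u 2 * v 2 + u 3 * v 3 + u 4 * v 4 + u 5 * v 5
      + u 6 * v 6 - u 7 * v 7 := by
  rw [etaForm, Fin.sum_univ_eight]
  norm_num [etaSign]
  ring

section Profile

variable {ρ : ℝ → ℝ} {σ : ℝ}

lemma deriv_deriv_cosh_comp (hρ : Differentiable ℝ ρ) (hρ' : DifferentiableAt ℝ (deriv ρ) σ) :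
    deriv (deriv fun s => cosh (ρ s)) σ
      = cosh (ρ σ) * deriv ρ σ ^ 2 + sinh (ρ σ) * deriv (deriv ρ) σ := by
  rw [show (deriv fun s => cosh (ρ s)) = fun s => sinh (ρ s) * deriv ρ s from
      funext fun s => deriv_cosh (hρ s),
    ((hρ σ).hasDerivAt.sinh.fun_mul hρ'.hasDerivAt).deriv]
  ring

lemma deriv_deriv_sinh_comp (hρ : Differentiable ℝ ρ) (hρ' : DifferentiableAt ℝ (deriv ρ) σ) :
    deriv (deriv fun s => sinh (ρ s)) σ
      = sinh (ρ σ) * deriv ρ σ ^ 2 + cosh (ρ σ) * deriv (deriv ρ) σ := by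
  rw [show (deriv fun s => sinh (ρ s)) = fun s => cosh (ρ s) * deriv ρ s from
      funext fun s => deriv_sinh (hρ s),
    ((hρ σ).hasDerivAt.cosh.fun_mul hρ'.hasDerivAt).deriv]
  ring

variable {κ ω : ℝ}

lemma deriv_deriv_cosh_comp_of_gkp (hρ : Differentiable ℝ ρ)
    (hρ' : DifferentiableAt ℝ (deriv ρ) σ)
    (hEoM : deriv (deriv ρ) σ = -κ ^ 2 * (ω ^ 2 - 1) * sinh (ρ σ) * cosh (ρ σ))
    (hVir : deriv ρ σ ^ 2 = κ ^ 2 * (cosh (ρ σ) ^ 2 - ω ^ 2 * sinh (ρ σ) ^ 2)) :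
    deriv (deriv fun s => cosh (ρ s)) σ = -(-2 * deriv ρ σ ^ 2 + κ ^ 2) * cosh (ρ σ) := by
  rw [deriv_deriv_cosh_comp hρ hρ', hEoM]
  linear_combination (-cosh (ρ σ)) * hVir - κ ^ 2 * cosh (ρ σ) * cosh_sq_sub_sinh_sq (ρ σ)

lemma deriv_deriv_sinh_comp_of_gkp (hρ : Differentiable ℝ ρ)
    (hρ' : DifferentiableAt ℝ (deriv ρ) σ)
    (hEoM : deriv (deriv ρ) σ = -κ ^ 2 * (ω ^ 2 - 1) * sinh (ρ σ) * cosh (ρ σ))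
    (hVir : deriv ρ σ ^ 2 = κ ^ 2 * (cosh (ρ σ) ^ 2 - ω ^ 2 * sinh (ρ σ) ^ 2)) :
    deriv (deriv fun s => sinh (ρ s)) σ
      = -(-2 * deriv ρ σ ^ 2 + (κ * ω) ^ 2) * sinh (ρ σ) := by
  rw [deriv_deriv_sinh_comp hρ hρ', hEoM]
  linear_combination (-sinh (ρ σ)) * hVir - κ ^ 2 * ω ^ 2 * sinh (ρ σ) * cosh_sq_sub_sinh_sq (ρ σ)

end Profile

def gkpAnsatz (κ ω : ℝ) (ρ : ℝ → ℝ) (τ σ : ℝ) : Fin 8 → ℝ :=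
  ![2 * cosh (ρ σ) * cos (κ * τ), 2 * sinh (ρ σ) * cos (κ * ω * τ),
    2 * sinh (ρ σ) * sin (κ * ω * τ), 0, 0, 0, 0, 2 * cosh (ρ σ) * sin (κ * τ)]

section Ansatz

variable {κ ω : ℝ} {ρ : ℝ → ℝ}

lemma gkpAnsatz_deriv_tau (τ σ : ℝ) :
    (fun μ => deriv (fun t => gkpAnsatz κ ω ρ t σ μ) τ)
      = ![-(2 * κ * cosh (ρ σ) * sin (κ * τ)), -(2 * κ * ω * sinh (ρ σ) * sin (κ * ω * τ)),
          2 * κ * ω * sinh (ρ σ) * cos (κ * ω * τ), 0, 0, 0, 0,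
          2 * κ * cosh (ρ σ) * cos (κ * τ)] := by
  funext μ
  fin_cases μ <;>
    simp only [gkpAnsatz, Fin.zero_eta, Fin.mk_one, Fin.reduceFinMk, Matrix.cons_val,
      Matrix.cons_val_zero, Matrix.cons_val_one, deriv_const', deriv_const_mul_field,
      deriv_cos_const_mul, deriv_sin_const_mul] <;> ring

lemma gkpAnsatz_deriv_sigma (hρ : Differentiable ℝ ρ) (τ σ : ℝ) :
    (fun μ => deriv (fun s => gkpAnsatz κ ω ρ τ s μ) σ)
      = ![2 * deriv ρ σ * sinh (ρ σ) * cos (κ * τ), 2 * deriv ρ σ * cosh (ρ σ) * cos (κ * ω * τ),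
          2 * deriv ρ σ * cosh (ρ σ) * sin (κ * ω * τ), 0, 0, 0, 0,
          2 * deriv ρ σ * sinh (ρ σ) * sin (κ * τ)] := by
  funext μ
  fin_cases μ <;>
    simp only [gkpAnsatz, Fin.zero_eta, Fin.mk_one, Fin.reduceFinMk, Matrix.cons_val,
      Matrix.cons_val_zero, Matrix.cons_val_one, deriv_const', deriv_mul_const_field,
      deriv_const_mul_field, deriv_cosh (hρ σ), deriv_sinh (hρ σ)] <;> ring

lemma gkpAnsatz_wave {σ : ℝ} (hρ : Differentiable ℝ ρ) (hρ' : DifferentiableAt ℝ (deriv ρ) σ)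
    (hEoM : deriv (deriv ρ) σ = -κ ^ 2 * (ω ^ 2 - 1) * sinh (ρ σ) * cosh (ρ σ))
    (hVir : deriv ρ σ ^ 2 = κ ^ 2 * (cosh (ρ σ) ^ 2 - ω ^ 2 * sinh (ρ σ) ^ 2)) (τ : ℝ)
    (μ : Fin 8) :
    deriv (fun t => deriv (fun t' => gkpAnsatz κ ω ρ t' σ μ) t) τ
      - deriv (fun s => deriv (fun s' => gkpAnsatz κ ω ρ τ s' μ) s) σ
      = -2 * deriv ρ σ ^ 2 * gkpAnsatz κ ω ρ τ σ μ := by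
  have hcosh := deriv_deriv_cosh_comp_of_gkp hρ hρ' hEoM hVir
  have hsinh := deriv_deriv_sinh_comp_of_gkp hρ hρ' hEoM hVir
  fin_cases μ
  · exact wave_eq_of_separable 2 hcosh (deriv_deriv_cos_const_mul κ τ)
  · exact wave_eq_of_separable 2 hsinh (deriv_deriv_cos_const_mul (κ * ω) τ)
  · exact wave_eq_of_separable 2 hsinh (deriv_deriv_sin_const_mul (κ * ω) τ)
  iterate 4 · simp [gkpAnsatz]
  · exact wave_eq_of_separable 2 hcosh (deriv_deriv_sin_const_mul κ τ)

lemma etaForm_gkpAnsatz_self (τ σ : ℝ) :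
    etaForm 5 (gkpAnsatz κ ω ρ τ σ) (gkpAnsatz κ ω ρ τ σ) = -2 ^ 2 := by
  simp only [etaForm_five, gkpAnsatz, Matrix.cons_val]
  linear_combination (-4 * cosh (ρ σ) ^ 2) * sin_sq_add_cos_sq (κ * τ)
    + (4 * sinh (ρ σ) ^ 2) * sin_sq_add_cos_sq (κ * ω * τ) - 4 * cosh_sq_sub_sinh_sq (ρ σ)

lemma etaForm_gkpAnsatz_deriv_tau_deriv_sigma (hρ : Differentiable ℝ ρ) (τ σ : ℝ) :
    etaForm 5 (fun μ => deriv (fun t => gkpAnsatz κ ω ρ t σ μ) τ)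
      (fun μ => deriv (fun s => gkpAnsatz κ ω ρ τ s μ) σ) = 0 := by
  rw [gkpAnsatz_deriv_tau, gkpAnsatz_deriv_sigma hρ, etaForm_five]
  simp only [Matrix.cons_val]
  ring

lemma etaForm_gkpAnsatz_deriv_tau_self (τ σ : ℝ) :
    etaForm 5 (fun μ => deriv (fun t => gkpAnsatz κ ω ρ t σ μ) τ)
      (fun μ => deriv (fun t => gkpAnsatz κ ω ρ t σ μ) τ)
      = 4 * κ ^ 2 * (ω ^ 2 * sinh (ρ σ) ^ 2 - cosh (ρ σ) ^ 2) := by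
  rw [gkpAnsatz_deriv_tau, etaForm_five]
  simp only [Matrix.cons_val]
  linear_combination (-4 * κ ^ 2 * cosh (ρ σ) ^ 2) * sin_sq_add_cos_sq (κ * τ)
    + (4 * κ ^ 2 * ω ^ 2 * sinh (ρ σ) ^ 2) * sin_sq_add_cos_sq (κ * ω * τ)

lemma etaForm_gkpAnsatz_deriv_sigma_self (hρ : Differentiable ℝ ρ) (τ σ : ℝ) :
    etaForm 5 (fun μ => deriv (fun s => gkpAnsatz κ ω ρ τ s μ) σ)
      (fun μ => deriv (fun s => gkpAnsatz κ ω ρ τ s μ) σ) = 4 * deriv ρ σ ^ 2 := by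
  rw [gkpAnsatz_deriv_sigma hρ, etaForm_five]
  simp only [Matrix.cons_val]
  linear_combination (-4 * deriv ρ σ ^ 2 * sinh (ρ σ) ^ 2) * sin_sq_add_cos_sq (κ * τ)
    + (4 * deriv ρ σ ^ 2 * cosh (ρ σ) ^ 2) * sin_sq_add_cos_sq (κ * ω * τ)
    + (4 * deriv ρ σ ^ 2) * cosh_sq_sub_sinh_sq (ρ σ)

lemma gkpAnsatz_virasoro {σ : ℝ} (hρ : Differentiable ℝ ρ)
    (hVir : deriv ρ σ ^ 2 = κ ^ 2 * (cosh (ρ σ) ^ 2 - ω ^ 2 * sinh (ρ σ) ^ 2)) (τ : ℝ) :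
    etaForm 5 (fun μ => deriv (fun t => gkpAnsatz κ ω ρ t σ μ) τ)
        (fun μ => deriv (fun t => gkpAnsatz κ ω ρ t σ μ) τ)
      + etaForm 5 (fun μ => deriv (fun s => gkpAnsatz κ ω ρ τ s μ) σ)
        (fun μ => deriv (fun s => gkpAnsatz κ ω ρ τ s μ) σ) = 0 := by
  rw [etaForm_gkpAnsatz_deriv_tau_self, etaForm_gkpAnsatz_deriv_sigma_self hρ]
  linear_combination 4 * hVir

end Ansatz

theorem rotating_ansatz_is_conformal_string_general (ω κ : ℝ)
    (ρ : ℝ → ℝ) (hρ1 : Differentiable ℝ ρ) (hρ2 : Differentiable ℝ (deriv ρ))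
    (hEoM : ∀ σ, deriv (deriv ρ) σ
      = -κ ^ 2 * (ω ^ 2 - 1) * Real.sinh (ρ σ) * Real.cosh (ρ σ))
    (hVir : ∀ σ, (deriv ρ σ) ^ 2
      = κ ^ 2 * (Real.cosh (ρ σ) ^ 2 - ω ^ 2 * Real.sinh (ρ σ) ^ 2)) :
    IsConformalString 5 2
      (fun τ σ =>
        ![2 * Real.cosh (ρ σ) * Real.cos (κ * τ),
          2 * Real.sinh (ρ σ) * Real.cos (κ * ω * τ),
          2 * Real.sinh (ρ σ) * Real.sin (κ * ω * τ),
          0, 0, 0, 0,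
          2 * Real.cosh (ρ σ) * Real.sin (κ * τ)])
      (fun _ σ => -2 * (deriv ρ σ) ^ 2) ∧
    (∀ τ σ : ℝ,
      etaForm 5
        (fun μ => deriv (fun s =>
          (![2 * Real.cosh (ρ s) * Real.cos (κ * τ),
             2 * Real.sinh (ρ s) * Real.cos (κ * ω * τ),
             2 * Real.sinh (ρ s) * Real.sin (κ * ω * τ),
             0, 0, 0, 0,
             2 * Real.cosh (ρ s) * Real.sin (κ * τ)] : Fin 8 → ℝ) μ) σ)
        (fun μ => deriv (fun s =>
          (![2 * Real.cosh (ρ s) * Real.cos (κ * τ),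
             2 * Real.sinh (ρ s) * Real.cos (κ * ω * τ),
             2 * Real.sinh (ρ s) * Real.sin (κ * ω * τ),
             0, 0, 0, 0,
             2 * Real.cosh (ρ s) * Real.sin (κ * τ)] : Fin 8 → ℝ) μ) σ)
      = 4 * (deriv ρ σ) ^ 2) := by
  refine ⟨⟨fun τ σ μ => gkpAnsatz_wave hρ1 (hρ2 σ) (hEoM σ) (hVir σ) τ μ,
    etaForm_gkpAnsatz_self, etaForm_gkpAnsatz_deriv_tau_deriv_sigma hρ1,
    fun τ σ => gkpAnsatz_virasoro hρ1 (hVir σ) τ⟩, etaForm_gkpAnsatz_deriv_sigma_self hρ1⟩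

/-- The rotating (GKP folded closed string) ansatz of the stringy membrane
solves the conformal-gauge string system on AdS₇ of radius ℓ = 2, with Λ = −2ρ'² and induced
sphere multiplier Λ̃ = η(∂σY,∂σY) = 4ρ'². -/
theorem rotating_ansatz_is_conformal_string (ω κ : ℝ) (hω : 1 < ω) (hκ : 0 < κ)
    (ρ : ℝ → ℝ) (hρ1 : Differentiable ℝ ρ) (hρ2 : Differentiable ℝ (deriv ρ))
    (hEoM : ∀ σ, deriv (deriv ρ) σ
      = -κ ^ 2 * (ω ^ 2 - 1) * Real.sinh (ρ σ) * Real.cosh (ρ σ))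
    (hVir : ∀ σ, (deriv ρ σ) ^ 2
      = κ ^ 2 * (Real.cosh (ρ σ) ^ 2 - ω ^ 2 * Real.sinh (ρ σ) ^ 2)) :
    IsConformalString 5 2
      (fun τ σ =>
        ![2 * Real.cosh (ρ σ) * Real.cos (κ * τ),
          2 * Real.sinh (ρ σ) * Real.cos (κ * ω * τ),
          2 * Real.sinh (ρ σ) * Real.sin (κ * ω * τ),
          0, 0, 0, 0,
          2 * Real.cosh (ρ σ) * Real.sin (κ * τ)])
      (fun _ σ => -2 * (deriv ρ σ) ^ 2) ∧
    (∀ τ σ : ℝ,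
      etaForm 5
        (fun μ => deriv (fun s =>
          (![2 * Real.cosh (ρ s) * Real.cos (κ * τ),
             2 * Real.sinh (ρ s) * Real.cos (κ * ω * τ),
             2 * Real.sinh (ρ s) * Real.sin (κ * ω * τ),
             0, 0, 0, 0,
             2 * Real.cosh (ρ s) * Real.sin (κ * τ)] : Fin 8 → ℝ) μ) σ)
        (fun μ => deriv (fun s =>
          (![2 * Real.cosh (ρ s) * Real.cos (κ * τ),
             2 * Real.sinh (ρ s) * Real.cos (κ * ω * τ),
             2 * Real.sinh (ρ s) * Real.sin (κ * ω * τ),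
             0, 0, 0, 0,
             2 * Real.cosh (ρ s) * Real.sin (κ * τ)] : Fin 8 → ℝ) μ) σ)
      = 4 * (deriv ρ σ) ^ 2) :=
  rotating_ansatz_is_conformal_string_general ω κ ρ hρ1 hρ2 hEoM hVir
end
end

section
/- Let t, ρ : ℝ → ℝ be twice differentiable functions of τ satisfying the pulsating-string equations t''·cosh²ρ + 2 t' ρ' sinh ρ cosh ρ = 0 and ρ'² − t'²cosh²ρ + sinh²ρ = 0. Then (a) the quantity e := t'·cosh²ρ is constant in τ; and (b) the function x := sinh ∘ ρ satisfies x'² = e² − x² − x⁴ for all τ; moreover (c) if in addition ρ'' + sinh ρ cosh ρ·(t'² + 1) = 0 holds, then x satisfies the Duffing equation x'' = −x − 2x³. -/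
/-!
The `t`-equation says exactly that `e = t' cosh² ρ` has zero derivative, so `e` is constant.
For `x = sinh ρ` one has `x' = ρ' cosh ρ`, and multiplying the Virasoro constraint by
`cosh² ρ = 1 + x²` gives `x'² = e² - x² - x⁴`. Differentiating `x'` once more produces
`ρ'² sinh ρ + ρ'' cosh ρ`; eliminating `ρ'²` by the constraint and `ρ''` by the `ρ`-equation
leaves the Duffing equation.
-/

noncomputable section

open Real

lemma hasDerivAt_mul_cosh_sq {u ρ : ℝ → ℝ} {u' ρ' τ : ℝ} (hu : HasDerivAt u u' τ)
    (hρ : HasDerivAt ρ ρ' τ) :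
    HasDerivAt (fun s => u s * cosh (ρ s) ^ 2)
      (u' * cosh (ρ τ) ^ 2 + 2 * u τ * ρ' * sinh (ρ τ) * cosh (ρ τ)) τ := by
  refine (hu.fun_mul (hρ.cosh.fun_pow 2)).congr_deriv ?_
  norm_num
  ring

lemma mul_cosh_sq_eq_of_eom {u ρ : ℝ → ℝ} (hu : Differentiable ℝ u) (hρ : Differentiable ℝ ρ)
    (hEoM : ∀ τ, deriv u τ * cosh (ρ τ) ^ 2
      + 2 * u τ * deriv ρ τ * sinh (ρ τ) * cosh (ρ τ) = 0) (τ₁ τ₂ : ℝ) :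
    u τ₁ * cosh (ρ τ₁) ^ 2 = u τ₂ * cosh (ρ τ₂) ^ 2 := by
  have hderiv (τ : ℝ) := hasDerivAt_mul_cosh_sq (hu τ).hasDerivAt (hρ τ).hasDerivAt
  exact is_const_of_deriv_eq_zero (fun τ => (hderiv τ).differentiableAt)
    (fun τ => (hderiv τ).deriv.trans (hEoM τ)) τ₁ τ₂

lemma sq_cosh_mul_eq_of_virasoro {r v w : ℝ}
    (hVir : w ^ 2 - v ^ 2 * cosh r ^ 2 + sinh r ^ 2 = 0) :
    (cosh r * w) ^ 2 = (v * cosh r ^ 2) ^ 2 - sinh r ^ 2 - sinh r ^ 4 := by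
  linear_combination cosh r ^ 2 * hVir - sinh r ^ 2 * cosh_sq r

lemma duffing_of_virasoro_of_eom {r v w a : ℝ}
    (hVir : w ^ 2 - v ^ 2 * cosh r ^ 2 + sinh r ^ 2 = 0)
    (hEoM : a + sinh r * cosh r * (v ^ 2 + 1) = 0) :
    sinh r * w * w + cosh r * a = -sinh r - 2 * sinh r ^ 3 := by
  linear_combination sinh r * hVir + cosh r * hEoM - sinh r * cosh_sq r

lemma deriv_sinh_comp {ρ : ℝ → ℝ} (hρ : Differentiable ℝ ρ) :
    deriv (fun τ => sinh (ρ τ)) = fun τ => cosh (ρ τ) * deriv ρ τ :=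
  funext fun τ => ((hρ τ).hasDerivAt.sinh).deriv

theorem pulsating_string_first_integral_general (t ρ : ℝ → ℝ)
    (ht2 : Differentiable ℝ (deriv t))
    (hρ1 : Differentiable ℝ ρ) (hρ2 : Differentiable ℝ (deriv ρ))
    (hEoMt : ∀ τ, deriv (deriv t) τ * Real.cosh (ρ τ) ^ 2
      + 2 * deriv t τ * deriv ρ τ * Real.sinh (ρ τ) * Real.cosh (ρ τ) = 0)
    (hVir : ∀ τ, (deriv ρ τ) ^ 2 - (deriv t τ) ^ 2 * Real.cosh (ρ τ) ^ 2
      + Real.sinh (ρ τ) ^ 2 = 0) :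
    -- (a) e := t'·cosh²ρ is constant in τ
    (∀ τ₁ τ₂ : ℝ, deriv t τ₁ * Real.cosh (ρ τ₁) ^ 2
      = deriv t τ₂ * Real.cosh (ρ τ₂) ^ 2) ∧
    -- (b) x := sinh ∘ ρ satisfies x'² = e² − x² − x⁴
    (∀ τ : ℝ,
      (deriv (fun τ' => Real.sinh (ρ τ')) τ) ^ 2
        = (deriv t 0 * Real.cosh (ρ 0) ^ 2) ^ 2
          - Real.sinh (ρ τ) ^ 2 - Real.sinh (ρ τ) ^ 4) ∧
    -- (c) with the ρ-equation of motion, x satisfies the Duffing equation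
    ((∀ τ, deriv (deriv ρ) τ
        + Real.sinh (ρ τ) * Real.cosh (ρ τ) * ((deriv t τ) ^ 2 + 1) = 0) →
      ∀ τ : ℝ,
        deriv (deriv (fun τ' => Real.sinh (ρ τ'))) τ
          = -Real.sinh (ρ τ) - 2 * Real.sinh (ρ τ) ^ 3) := by
  have hconst := mul_cosh_sq_eq_of_eom ht2 hρ1 hEoMt
  refine ⟨hconst, fun τ => ?_, fun hEoMρ τ => ?_⟩
  · rw [deriv_sinh_comp hρ1, ← hconst τ 0]
    exact sq_cosh_mul_eq_of_virasoro (hVir τ)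
  · rw [deriv_sinh_comp hρ1,
      (((hρ1 τ).hasDerivAt.cosh).fun_mul (hρ2 τ).hasDerivAt).deriv]
    exact duffing_of_virasoro_of_eom (hVir τ) (hEoMρ τ)

/-- For the pulsating string: (a) e := t'·cosh²ρ is a constant of motion;
(b) x := sinh ∘ ρ satisfies the first integral x'² = e² − x² − x⁴; and (c) given also the
ρ-equation of motion, x satisfies the Duffing equation x'' = −x − 2x³. -/
theorem pulsating_string_first_integral (t ρ : ℝ → ℝ)
    (ht1 : Differentiable ℝ t) (ht2 : Differentiable ℝ (deriv t))
    (hρ1 : Differentiable ℝ ρ) (hρ2 : Differentiable ℝ (deriv ρ))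
    (hEoMt : ∀ τ, deriv (deriv t) τ * Real.cosh (ρ τ) ^ 2
      + 2 * deriv t τ * deriv ρ τ * Real.sinh (ρ τ) * Real.cosh (ρ τ) = 0)
    (hVir : ∀ τ, (deriv ρ τ) ^ 2 - (deriv t τ) ^ 2 * Real.cosh (ρ τ) ^ 2
      + Real.sinh (ρ τ) ^ 2 = 0) :
    -- (a) e := t'·cosh²ρ is constant in τ
    (∀ τ₁ τ₂ : ℝ, deriv t τ₁ * Real.cosh (ρ τ₁) ^ 2
      = deriv t τ₂ * Real.cosh (ρ τ₂) ^ 2) ∧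
    -- (b) x := sinh ∘ ρ satisfies x'² = e² − x² − x⁴
    (∀ τ : ℝ,
      (deriv (fun τ' => Real.sinh (ρ τ')) τ) ^ 2
        = (deriv t 0 * Real.cosh (ρ 0) ^ 2) ^ 2
          - Real.sinh (ρ τ) ^ 2 - Real.sinh (ρ τ) ^ 4) ∧
    -- (c) with the ρ-equation of motion, x satisfies the Duffing equation
    ((∀ τ, deriv (deriv ρ) τ
        + Real.sinh (ρ τ) * Real.cosh (ρ τ) * ((deriv t τ) ^ 2 + 1) = 0) →
      ∀ τ : ℝ,
        deriv (deriv (fun τ' => Real.sinh (ρ τ'))) τ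
          = -Real.sinh (ρ τ) - 2 * Real.sinh (ρ τ) ^ 3) :=
  pulsating_string_first_integral_general t ρ ht2 hρ1 hρ2 hEoMt hVir
end
end

section
/- Let e > 0 and let x₀ > 0 be the unique positive number with x₀²(1 + x₀²) = e². Then the maximal solution x of the initial value problem x'' = −x − 2x³, x(0) = 0, x'(0) = e is defined on all of ℝ, satisfies |x(τ)| ≤ x₀ for all τ with sup_τ |x(τ)| = x₀, and is periodic with period T = 4·∫₀^{x₀} (e² − s² − s⁴)^{−1/2} ds; in particular x(T/4) = x₀ and x'(T/4) = 0. (Equivalently: the radial profile ρ with sinh ρ = x of the pulsating string oscillates between ±ρ₀, where sinh ρ₀ cosh ρ₀ = e.) -/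
/-!
Put `a = x₀`. Since `e² - s² - s⁴ = (a² - s²) (1 + a² + s²)`, the substitution `x = a sin θ`
turns the energy equation `x'² = e² - x² - x⁴` into `θ'² = 1 + a² + a² sin² θ`, whose right-hand
side is positive and `π`-periodic: the turning points of `x` disappear. So `θ` is the inverse of
the increasing bijection `Φ θ = ∫₀^θ dφ / √(1 + a² + a² sin² φ)` and `x = a sin θ` is a smooth
solution on all of `ℝ`. As `Φ (θ + π) = Φ θ + Φ π` and `Φ π = 2 Φ (π / 2)`, the solution changes
sign after time `Φ π`, so it has period `4 Φ (π / 2)`, and the substitution `s = a sin φ` turns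
`Φ (π / 2)` into `∫₀^a ds / √(e² - s² - s⁴)`. Uniqueness is Picard–Lindelöf: conservation of
energy keeps every solution in a fixed compact ball of phase space, where the vector field is
Lipschitz.
-/

noncomputable section

open Real Set MeasureTheory

def IsNewtonSolution (f x : ℝ → ℝ) : Prop :=
  Differentiable ℝ x ∧ Differentiable ℝ (deriv x) ∧ ∀ τ, deriv (deriv x) τ = f (x τ)

namespace IsNewtonSolution

variable {f x y : ℝ → ℝ}

theorem of_hasDerivAt {v : ℝ → ℝ} (hx : ∀ τ, HasDerivAt x (v τ) τ)
    (hv : ∀ τ, HasDerivAt v (f (x τ)) τ) : IsNewtonSolution f x := by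
  have hxv : deriv x = v := funext fun τ => (hx τ).deriv
  refine ⟨fun τ => (hx τ).differentiableAt, ?_, fun τ => ?_⟩ <;> rw [hxv]
  exacts [fun τ => (hv τ).differentiableAt, (hv τ).deriv]

theorem hasDerivAt (h : IsNewtonSolution f x) (τ : ℝ) : HasDerivAt x (deriv x τ) τ :=
  (h.1 τ).hasDerivAt

theorem hasDerivAt_deriv (h : IsNewtonSolution f x) (τ : ℝ) :
    HasDerivAt (deriv x) (f (x τ)) τ :=
  h.2.2 τ ▸ (h.2.1 τ).hasDerivAt

theorem energy_eq {V : ℝ → ℝ} (hV : ∀ y, HasDerivAt V (-2 * f y) y)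
    (h : IsNewtonSolution f x) (τ : ℝ) :
    deriv x τ ^ 2 + V (x τ) = deriv x 0 ^ 2 + V (x 0) := by
  have hE : ∀ t, HasDerivAt (fun t => deriv x t ^ 2 + V (x t)) 0 t := fun t =>
    (((h.hasDerivAt_deriv t).fun_pow 2).add ((hV (x t)).comp t (h.hasDerivAt t))).congr_deriv
      (by ring)
  exact is_const_of_deriv_eq_zero (fun t => (hE t).differentiableAt) (fun t => (hE t).deriv) τ 0

theorem eq_of_mem_closedBall (hf : ContDiff ℝ 1 f) (hx : IsNewtonSolution f x)
    (hy : IsNewtonSolution f y) {R : ℝ}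
    (hxR : ∀ τ, (x τ, deriv x τ) ∈ Metric.closedBall 0 R)
    (hyR : ∀ τ, (y τ, deriv y τ) ∈ Metric.closedBall 0 R)
    (h₀ : x 0 = y 0) (h₀' : deriv x 0 = deriv y 0) : x = y := by
  obtain ⟨K, hK⟩ := (show ContDiff ℝ 1 fun z : ℝ × ℝ => (z.2, f z.1) by fun_prop).contDiffOn
    |>.exists_lipschitzOnWith one_ne_zero (convex_closedBall 0 R) (isCompact_closedBall 0 R)
  have hphase : ∀ {z}, IsNewtonSolution f z →
      ∀ τ, HasDerivAt (fun t => (z t, deriv z t)) (deriv z τ, f (z τ)) τ :=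
    fun hz τ => (hz.hasDerivAt τ).prodMk (hz.hasDerivAt_deriv τ)
  have hxy := ODE_solution_unique_univ (v := fun _ z => (z.2, f z.1)) (t₀ := 0)
    (fun _ => hK) (fun τ => ⟨hphase hx τ, hxR τ⟩) (fun τ => ⟨hphase hy τ, hyR τ⟩)
    (by rw [h₀, h₀'])
  exact funext fun τ => congrArg Prod.fst (congrFun hxy τ)

end IsNewtonSolution

namespace Duffing

def force (y : ℝ) : ℝ := -y - 2 * y ^ 3

theorem energy_eq {x : ℝ → ℝ} (h : IsNewtonSolution force x) (τ : ℝ) :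
    deriv x τ ^ 2 + x τ ^ 2 + x τ ^ 4 = deriv x 0 ^ 2 + x 0 ^ 2 + x 0 ^ 4 := by
  have hV (y : ℝ) : HasDerivAt (fun y => y ^ 2 + y ^ 4) (-2 * force y) y :=
    ((hasDerivAt_pow 2 y).add (hasDerivAt_pow 4 y)).congr_deriv (by simp only [force]; ring)
  simpa only [add_assoc] using h.energy_eq hV τ

theorem phase_mem_closedBall {x : ℝ → ℝ} (h : IsNewtonSolution force x) (τ : ℝ) :
    (x τ, deriv x τ) ∈ Metric.closedBall 0 √(deriv x 0 ^ 2 + x 0 ^ 2 + x 0 ^ 4) := by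
  rw [mem_closedBall_zero_iff, Prod.norm_def, ← energy_eq h τ]
  exact max_le (abs_le_sqrt (by nlinarith [sq_nonneg (deriv x τ), sq_nonneg (x τ ^ 2)]))
    (abs_le_sqrt (by nlinarith [sq_nonneg (x τ), sq_nonneg (x τ ^ 2)]))

theorem eq_of_initial_eq {x y : ℝ → ℝ} (hx : IsNewtonSolution force x)
    (hy : IsNewtonSolution force y) (h₀ : x 0 = y 0) (h₀' : deriv x 0 = deriv y 0) : x = y :=
  hx.eq_of_mem_closedBall (by unfold force; fun_prop) hy (phase_mem_closedBall hx)
    (by simpa only [h₀, h₀'] using phase_mem_closedBall hy) h₀ h₀'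

def angularSpeed (a φ : ℝ) : ℝ := √(1 + a ^ 2 + a ^ 2 * sin φ ^ 2)

def angleTime (a θ : ℝ) : ℝ := ∫ φ in 0..θ, (angularSpeed a φ)⁻¹

variable (a : ℝ)

theorem angularSpeed_pos (φ : ℝ) : 0 < angularSpeed a φ :=
  one_pos.trans_le (one_le_sqrt.2 (by nlinarith [sq_nonneg a, sq_nonneg (a * sin φ)]))

theorem continuous_angularSpeed : Continuous (angularSpeed a) := by
  unfold angularSpeed; fun_prop

theorem angularSpeed_add_pi (φ : ℝ) : angularSpeed a (φ + π) = angularSpeed a φ := by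
  simp only [angularSpeed, sin_add_pi, neg_sq]

theorem angularSpeed_pi_sub (φ : ℝ) : angularSpeed a (π - φ) = angularSpeed a φ := by
  simp only [angularSpeed, sin_pi_sub]

theorem hasDerivAt_angularSpeed (φ : ℝ) :
    HasDerivAt (angularSpeed a) (a ^ 2 * sin φ * cos φ / angularSpeed a φ) φ := by
  have h := (((hasDerivAt_sin φ).fun_pow 2).const_mul (a ^ 2)).const_add (1 + a ^ 2) |>.sqrt
    (by positivity)
  exact h.congr_deriv (by simp only [angularSpeed]; ring)

theorem continuous_inv_angularSpeed : Continuous fun φ => (angularSpeed a φ)⁻¹ :=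
  (continuous_angularSpeed a).inv₀ fun φ => (angularSpeed_pos a φ).ne'

theorem hasDerivAt_angleTime (θ : ℝ) : HasDerivAt (angleTime a) (angularSpeed a θ)⁻¹ θ :=
  ((continuous_inv_angularSpeed a).integral_hasStrictDerivAt 0 θ).hasDerivAt

theorem continuous_angleTime : Continuous (angleTime a) :=
  continuous_iff_continuousAt.2 fun θ => (hasDerivAt_angleTime a θ).continuousAt

theorem strictMono_angleTime : StrictMono (angleTime a) :=
  strictMono_of_deriv_pos fun θ =>
    (hasDerivAt_angleTime a θ).deriv ▸ inv_pos.2 (angularSpeed_pos a θ)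

theorem angleTime_zero : angleTime a 0 = 0 := intervalIntegral.integral_same

theorem angleTime_add_pi (θ : ℝ) : angleTime a (θ + π) = angleTime a θ + angleTime a π := by
  have hc := continuous_inv_angularSpeed a
  have hper : Function.Periodic (fun φ => (angularSpeed a φ)⁻¹) π := fun φ => by
    simp only [angularSpeed_add_pi]
  rw [angleTime, ← intervalIntegral.integral_add_adjacent_intervals (hc.intervalIntegrable 0 θ)
    (hc.intervalIntegrable θ (θ + π)), hper.intervalIntegral_add_eq θ 0, zero_add]
  rfl

theorem angleTime_int_mul_pi (n : ℤ) : angleTime a (n * π) = n * angleTime a π := by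
  have hper : Function.Periodic (fun θ => angleTime a θ - angleTime a π / π * θ) π := fun θ => by
    simp only [angleTime_add_pi]
    field_simp
    ring
  have h := (hper.int_mul n) 0
  simp only [zero_add, angleTime_zero, mul_zero, sub_zero] at h
  rw [sub_eq_zero.1 h]
  field_simp

theorem surjective_angleTime : Function.Surjective (angleTime a) := by
  intro τ
  have hP : 0 < angleTime a π := by
    simpa only [angleTime_zero] using strictMono_angleTime a pi_pos
  have hsub := intermediate_value_univ ((⌊τ / angleTime a π⌋ : ℝ) * π)
    ((⌈τ / angleTime a π⌉ : ℝ) * π) (continuous_angleTime a)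
  rw [angleTime_int_mul_pi, angleTime_int_mul_pi] at hsub
  exact hsub ⟨(le_div_iff₀ hP).1 (Int.floor_le _), (div_le_iff₀ hP).1 (Int.le_ceil _)⟩

theorem angleTime_pi : angleTime a π = 2 * angleTime a (π / 2) := by
  have hc := continuous_inv_angularSpeed a
  have hsymm : ∫ φ in π / 2..π, (angularSpeed a φ)⁻¹ = ∫ φ in 0..π / 2, (angularSpeed a φ)⁻¹ := by
    calc ∫ φ in π / 2..π, (angularSpeed a φ)⁻¹
        = ∫ φ in π / 2..π, (angularSpeed a (π - φ))⁻¹ := by simp only [angularSpeed_pi_sub]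
      _ = ∫ φ in 0..π / 2, (angularSpeed a φ)⁻¹ := by
        rw [intervalIntegral.integral_comp_sub_left (fun φ => (angularSpeed a φ)⁻¹)]
        ring_nf
  rw [angleTime, ← intervalIntegral.integral_add_adjacent_intervals
    (hc.intervalIntegrable 0 (π / 2)) (hc.intervalIntegrable (π / 2) π), hsymm, angleTime]
  ring

def angle : ℝ ≃o ℝ :=
  (StrictMono.orderIsoOfSurjective _ (strictMono_angleTime a) (surjective_angleTime a)).symm

theorem angleTime_angle (τ : ℝ) : angleTime a (angle a τ) = τ :=
  (StrictMono.orderIsoOfSurjective _ (strictMono_angleTime a)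
    (surjective_angleTime a)).apply_symm_apply τ

theorem angle_angleTime (θ : ℝ) : angle a (angleTime a θ) = θ :=
  StrictMono.orderIsoOfSurjective_symm_apply_self _ _ _ θ

theorem hasDerivAt_angle (τ : ℝ) : HasDerivAt (angle a) (angularSpeed a (angle a τ)) τ := by
  simpa only [inv_inv] using (hasDerivAt_angleTime a (angle a τ)).of_local_left_inverse
    (angle a).continuous.continuousAt (inv_ne_zero (angularSpeed_pos a _).ne')
    (Filter.Eventually.of_forall (angleTime_angle a))

theorem angle_add_angleTime_pi (τ : ℝ) : angle a (τ + angleTime a π) = angle a τ + π := by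
  conv_lhs => rw [← angleTime_angle a τ, ← angleTime_add_pi, angle_angleTime]

def orbit (τ : ℝ) : ℝ := a * sin (angle a τ)

theorem hasDerivAt_orbit (τ : ℝ) :
    HasDerivAt (orbit a) (a * cos (angle a τ) * angularSpeed a (angle a τ)) τ :=
  ((hasDerivAt_angle a τ).sin.const_mul a).congr_deriv (by ring)

theorem hasDerivAt_orbit_velocity (τ : ℝ) :
    HasDerivAt (fun t => a * cos (angle a t) * angularSpeed a (angle a t))
      (force (orbit a τ)) τ := by
  have hθ := hasDerivAt_angle a τ
  refine ((hθ.cos.const_mul a).mul ((hasDerivAt_angularSpeed a _).comp τ hθ)).congr_deriv ?_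
  set θ := angle a τ
  have hψ := (angularSpeed_pos a θ).ne'
  have hψ2 : angularSpeed a θ ^ 2 = 1 + a ^ 2 + a ^ 2 * sin θ ^ 2 := sq_sqrt (by positivity)
  simp only [force, orbit, Function.comp_apply]
  field_simp
  linear_combination -(a * sin θ) * hψ2 + a ^ 3 * sin θ * sin_sq_add_cos_sq θ

theorem isNewtonSolution_orbit : IsNewtonSolution force (orbit a) :=
  .of_hasDerivAt (hasDerivAt_orbit a) (hasDerivAt_orbit_velocity a)

theorem deriv_orbit (τ : ℝ) :
    deriv (orbit a) τ = a * cos (angle a τ) * angularSpeed a (angle a τ) :=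
  (hasDerivAt_orbit a τ).deriv

theorem orbit_antiperiodic : Function.Antiperiodic (orbit a) (angleTime a π) := fun τ => by
  simp only [orbit, angle_add_angleTime_pi, sin_add_pi, mul_neg]

theorem orbit_periodic : Function.Periodic (orbit a) (4 * angleTime a (π / 2)) := by
  rw [show 4 * angleTime a (π / 2) = 2 * angleTime a π by rw [angleTime_pi]; ring]
  exact (orbit_antiperiodic a).periodic_two_mul

theorem abs_orbit_le (τ : ℝ) : |orbit a τ| ≤ |a| := by
  rw [orbit, abs_mul]
  exact mul_le_of_le_one_right (abs_nonneg a) (abs_sin_le_one _)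

theorem angle_zero : angle a 0 = 0 := by
  simpa only [angleTime_zero] using angle_angleTime a 0

theorem orbit_zero : orbit a 0 = 0 := by
  rw [orbit, angle_zero, sin_zero, mul_zero]

theorem orbit_angleTime_pi_div_two : orbit a (angleTime a (π / 2)) = a := by
  rw [orbit, angle_angleTime, sin_pi_div_two, mul_one]

theorem deriv_orbit_angleTime_pi_div_two : deriv (orbit a) (angleTime a (π / 2)) = 0 := by
  rw [deriv_orbit, angle_angleTime, cos_pi_div_two, mul_zero, zero_mul]

variable {a}

theorem deriv_orbit_zero {e : ℝ} (ha : 0 ≤ a) (he : 0 ≤ e) (hae : a ^ 2 * (1 + a ^ 2) = e ^ 2) :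
    deriv (orbit a) 0 = e := by
  rw [deriv_orbit, angle_zero, cos_zero, mul_one, angularSpeed, sin_zero, ← sqrt_sq he, ← hae,
    sqrt_mul (sq_nonneg a), sqrt_sq ha]
  ring_nf

theorem integral_inv_sqrt_eq_angleTime {e : ℝ} (ha : 0 < a) (hae : a ^ 2 * (1 + a ^ 2) = e ^ 2) :
    ∫ s in 0..a, (√(e ^ 2 - s ^ 2 - s ^ 4))⁻¹ = angleTime a (π / 2) := by
  have hmono : StrictMonoOn (fun φ => a * sin φ) (Icc 0 (π / 2)) := fun φ hφ ψ hψ hlt =>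
    mul_lt_mul_of_pos_left (strictMonoOn_sin ⟨by linarith [hφ.1, pi_pos], hφ.2⟩
      ⟨by linarith [hψ.1, pi_pos], hψ.2⟩ hlt) ha
  have himage : (fun φ => a * sin φ) '' Ioo 0 (π / 2) = Ioo 0 a := by
    simpa only [sin_zero, mul_zero, sin_pi_div_two, mul_one] using
      (show Continuous fun φ => a * sin φ by fun_prop).continuousOn.image_Ioo_of_strictMonoOn
        (by positivity) hmono
  rw [angleTime, intervalIntegral.integral_of_le ha.le, intervalIntegral.integral_of_le
    (by positivity), integral_Ioc_eq_integral_Ioo, integral_Ioc_eq_integral_Ioo, ← himage,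
    integral_image_eq_integral_abs_deriv_smul measurableSet_Ioo
      (fun φ _ => ((hasDerivAt_sin φ).const_mul a).hasDerivWithinAt)
      (hmono.injOn.mono Ioo_subset_Icc_self)]
  refine setIntegral_congr_fun measurableSet_Ioo fun φ hφ => ?_
  have hcos : 0 < cos φ := cos_pos_of_mem_Ioo ⟨by linarith [hφ.1, pi_pos], hφ.2⟩
  have hψ := angularSpeed_pos a φ
  have hsq : e ^ 2 - (a * sin φ) ^ 2 - (a * sin φ) ^ 4 = (a * cos φ * angularSpeed a φ) ^ 2 := by
    rw [mul_pow (a * cos φ), angularSpeed, sq_sqrt (by positivity)]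
    linear_combination -hae - a ^ 2 * (1 + a ^ 2 + a ^ 2 * sin φ ^ 2) * sin_sq_add_cos_sq φ
  rw [hsq, sqrt_sq (by positivity), abs_of_pos (by positivity), smul_eq_mul]
  field_simp

end Duffing

open Duffing in
/-- The (unique, global) solution of the Duffing initial value problem
x'' = −x − 2x³, x(0) = 0, x'(0) = e oscillates between ±x₀ (where x₀²(1+x₀²) = e²) and is
periodic with period T = 4∫₀^{x₀}(e² − s² − s⁴)^{−1/2} ds, reaching its amplitude with zero
velocity at T/4. -/
theorem duffing_pulsating_solution (e x₀ : ℝ) (he : 0 < e) (hx₀pos : 0 < x₀)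
    (hx₀ : x₀ ^ 2 * (1 + x₀ ^ 2) = e ^ 2) :
    ∃ x : ℝ → ℝ,
      -- x is the (global) solution of the IVP
      Differentiable ℝ x ∧ Differentiable ℝ (deriv x) ∧
      (∀ τ, deriv (deriv x) τ = -x τ - 2 * x τ ^ 3) ∧
      x 0 = 0 ∧ deriv x 0 = e ∧
      -- uniqueness: any global solution of the IVP coincides with x
      (∀ y : ℝ → ℝ, Differentiable ℝ y → Differentiable ℝ (deriv y) →
        (∀ τ, deriv (deriv y) τ = -y τ - 2 * y τ ^ 3) →
        y 0 = 0 → deriv y 0 = e → y = x) ∧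
      -- the amplitude is exactly x₀
      (∀ τ, |x τ| ≤ x₀) ∧ (⨆ τ : ℝ, |x τ|) = x₀ ∧
      -- periodicity with period T, and quarter-period data
      Function.Periodic x
        (4 * ∫ s in (0:ℝ)..x₀, (Real.sqrt (e ^ 2 - s ^ 2 - s ^ 4))⁻¹) ∧
      x ((4 * ∫ s in (0:ℝ)..x₀, (Real.sqrt (e ^ 2 - s ^ 2 - s ^ 4))⁻¹) / 4) = x₀ ∧
      deriv x ((4 * ∫ s in (0:ℝ)..x₀, (Real.sqrt (e ^ 2 - s ^ 2 - s ^ 4))⁻¹) / 4) = 0 := by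
  have hx := isNewtonSolution_orbit x₀
  have hv₀ := deriv_orbit_zero hx₀pos.le he.le hx₀
  have hbound (τ : ℝ) : |orbit x₀ τ| ≤ x₀ := (abs_orbit_le x₀ τ).trans_eq (abs_of_pos hx₀pos)
  rw [integral_inv_sqrt_eq_angleTime hx₀pos hx₀, mul_div_cancel_left₀ _ four_ne_zero]
  refine ⟨orbit x₀, hx.1, hx.2.1, hx.2.2, orbit_zero x₀, hv₀,
    fun y hy hy' hy'' hy₀ hy₀' => eq_of_initial_eq ⟨hy, hy', hy''⟩ hx
      (by rw [hy₀, orbit_zero]) (by rw [hy₀', hv₀]),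
    hbound, ?_, orbit_periodic x₀, orbit_angleTime_pi_div_two x₀,
    deriv_orbit_angleTime_pi_div_two x₀⟩
  refine le_antisymm (ciSup_le hbound) (le_ciSup_of_le ⟨x₀, ?_⟩ (angleTime x₀ (π / 2)) ?_)
  · exact forall_mem_range.2 hbound
  · rw [orbit_angleTime_pi_div_two, abs_of_pos hx₀pos]
end
end
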